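/- arXiv:2602.16460 — 2 statements merged into one kernel-verified Lean document; each statement's English description precedes it below -/
import Mathlib

section
/- Let Φ > 0 and set F(y) = (3Φ/4)(1 − y²) (the Poiseuille profile, corresponding to A = −Φ/4, B = 0, C = 3Φ/4). Let ψ : ℝ × [-1,1] → ℝ be a smooth function for which there exists M > 0 such that for every a ∈ ℝ the integral over (a,a+1) × (-1,1) of the sum of the squares of all partial derivatives of ψ of order between 1 and 3 is at most M, and assume ψ(−x,y) = ψ(x,y) for all (x,y). If ψ satisfies ψ_xxxx + 2ψ_xxyy + ψ_yyyy − [F(y)(ψ_xyy + ψ_xxx) + (3Φ/2)ψ_x] + (ψ_x(Δψ)_y − ψ_y(Δψ)_x) = 0 in S = ℝ × (-1,1), together with ψ(x,±1) = ψ_x(x,±1) = ψ_y(x,±1) = 0 for all x ∈ ℝ, then ψ is identically zero. Equivalently: for an arbitrary flux Φ > 0, the Poiseuille flow u_Φ(x,y) = (3Φ/4)(1−y²)e₁, p_Φ(x,y) = −(3Φ/2)x is the only solution in its symmetry and local-regularity class. -/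
open MeasureTheory intervalIntegral

/-- Partial derivative in the first (horizontal) variable. -/
noncomputable def pdx (f : ℝ → ℝ → ℝ) : ℝ → ℝ → ℝ := fun x y => deriv (fun t => f t y) x

/-- Partial derivative in the second (vertical) variable. -/
noncomputable def pdy (f : ℝ → ℝ → ℝ) : ℝ → ℝ → ℝ := fun x y => deriv (fun t => f x t) y

namespace PoiseuilleAux

variable {F : ℝ → ℝ → ℝ}

/-- slice in x has derivative given by fderiv applied to (1,0) -/
lemma hasDerivAt_slice_x (hF : ContDiff ℝ (⊤ : ℕ∞) (Function.uncurry F)) (x y : ℝ) :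
    HasDerivAt (fun t => F t y) (fderiv ℝ (Function.uncurry F) (x, y) (1, 0)) x := by
  have h1 : HasDerivAt (fun t : ℝ => (t, y)) ((1 : ℝ), (0 : ℝ)) x :=
    (hasDerivAt_id x).prodMk (hasDerivAt_const x y)
  have h2 : HasFDerivAt (Function.uncurry F) (fderiv ℝ (Function.uncurry F) (x, y)) (x, y) :=
    (hF.differentiable (by simp)).differentiableAt.hasFDerivAt
  exact h2.comp_hasDerivAt x h1

lemma hasDerivAt_slice_y (hF : ContDiff ℝ (⊤ : ℕ∞) (Function.uncurry F)) (x y : ℝ) :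
    HasDerivAt (fun t => F x t) (fderiv ℝ (Function.uncurry F) (x, y) (0, 1)) y := by
  have h1 : HasDerivAt (fun t : ℝ => (x, t)) ((0 : ℝ), (1 : ℝ)) y :=
    (hasDerivAt_const y x).prodMk (hasDerivAt_id y)
  have h2 : HasFDerivAt (Function.uncurry F) (fderiv ℝ (Function.uncurry F) (x, y)) (x, y) :=
    (hF.differentiable (by simp)).differentiableAt.hasFDerivAt
  exact h2.comp_hasDerivAt y h1

lemma pdx_eq (hF : ContDiff ℝ (⊤ : ℕ∞) (Function.uncurry F)) (x y : ℝ) :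
    pdx F x y = fderiv ℝ (Function.uncurry F) (x, y) (1, 0) :=
  (hasDerivAt_slice_x hF x y).deriv

lemma pdy_eq (hF : ContDiff ℝ (⊤ : ℕ∞) (Function.uncurry F)) (x y : ℝ) :
    pdy F x y = fderiv ℝ (Function.uncurry F) (x, y) (0, 1) :=
  (hasDerivAt_slice_y hF x y).deriv

lemma contDiff_pdx (hF : ContDiff ℝ (⊤ : ℕ∞) (Function.uncurry F)) :
    ContDiff ℝ (⊤ : ℕ∞) (Function.uncurry (pdx F)) := by
  have h : ContDiff ℝ (⊤ : ℕ∞) (fun p : ℝ × ℝ => fderiv ℝ (Function.uncurry F) p ((1 : ℝ), (0 : ℝ))) :=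
    (hF.fderiv_right (by simp)).clm_apply contDiff_const
  have he : Function.uncurry (pdx F)
      = fun p : ℝ × ℝ => fderiv ℝ (Function.uncurry F) p ((1 : ℝ), (0 : ℝ)) := by
    funext p
    exact pdx_eq hF p.1 p.2
  rw [he]; exact h

lemma contDiff_pdy (hF : ContDiff ℝ (⊤ : ℕ∞) (Function.uncurry F)) :
    ContDiff ℝ (⊤ : ℕ∞) (Function.uncurry (pdy F)) := by
  have h : ContDiff ℝ (⊤ : ℕ∞) (fun p : ℝ × ℝ => fderiv ℝ (Function.uncurry F) p ((0 : ℝ), (1 : ℝ))) :=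
    (hF.fderiv_right (by simp)).clm_apply contDiff_const
  have he : Function.uncurry (pdy F)
      = fun p : ℝ × ℝ => fderiv ℝ (Function.uncurry F) p ((0 : ℝ), (1 : ℝ)) := by
    funext p
    exact pdy_eq hF p.1 p.2
  rw [he]; exact h

/-- pdx and pdy commute for smooth functions -/
lemma pdx_pdy_comm (hF : ContDiff ℝ (⊤ : ℕ∞) (Function.uncurry F)) (x y : ℝ) :
    pdy (pdx F) x y = pdx (pdy F) x y := by
  set f := Function.uncurry F with hf
  have hdf : Differentiable ℝ f := hF.differentiable (by simp)
  have hdf' : Differentiable ℝ (fderiv ℝ f) := (hF.fderiv_right (m := 1) (WithTop.coe_le_coe.2 le_top)).differentiable (by simp)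
  have hff : HasFDerivAt (fderiv ℝ f) (fderiv ℝ (fderiv ℝ f) (x, y)) (x, y) :=
    (hdf' (x, y)).hasFDerivAt
  set f2 := fderiv ℝ (fderiv ℝ f) (x, y) with hf2
  have hsymm : ∀ v w : ℝ × ℝ, f2 v w = f2 w v :=
    fun v w => second_derivative_symmetric (fun p => (hdf p).hasFDerivAt) hff v w
  -- compute pdy (pdx F) x y
  have h1 : pdy (pdx F) x y = f2 (0, 1) (1, 0) := by
    have hs : (fun t => pdx F x t) = fun t => fderiv ℝ f (x, t) ((1 : ℝ), (0 : ℝ)) := by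
      funext t; exact pdx_eq hF x t
    have hc : HasDerivAt (fun t : ℝ => (x, t)) ((0 : ℝ), (1 : ℝ)) y :=
      (hasDerivAt_const y x).prodMk (hasDerivAt_id y)
    have h3 : HasDerivAt (fun t : ℝ => fderiv ℝ f (x, t)) (f2 (0, 1)) y :=
      hff.comp_hasDerivAt y hc
    have h4 : HasDerivAt (fun t : ℝ => fderiv ℝ f (x, t) ((1 : ℝ), (0 : ℝ)))
        (f2 (0, 1) ((1 : ℝ), (0 : ℝ))) y := by
      simpa using h3.clm_apply (hasDerivAt_const y ((1 : ℝ), (0 : ℝ)))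
    rw [pdy, hs]
    exact h4.deriv
  have h2 : pdx (pdy F) x y = f2 (1, 0) (0, 1) := by
    have hs : (fun t => pdy F t y) = fun t => fderiv ℝ f (t, y) ((0 : ℝ), (1 : ℝ)) := by
      funext t; exact pdy_eq hF t y
    have hc : HasDerivAt (fun t : ℝ => (t, y)) ((1 : ℝ), (0 : ℝ)) x :=
      (hasDerivAt_id x).prodMk (hasDerivAt_const x y)
    have h3 : HasDerivAt (fun t : ℝ => fderiv ℝ f (t, y)) (f2 (1, 0)) x :=
      hff.comp_hasDerivAt x hc
    have h4 : HasDerivAt (fun t : ℝ => fderiv ℝ f (t, y) ((0 : ℝ), (1 : ℝ)))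
        (f2 (1, 0) ((0 : ℝ), (1 : ℝ))) x := by
      simpa using h3.clm_apply (hasDerivAt_const x ((0 : ℝ), (1 : ℝ)))
    rw [pdx, hs]
    exact h4.deriv
  rw [h1, h2, hsymm]

/-! ### parity -/

def EvenX (F : ℝ → ℝ → ℝ) : Prop := ∀ x y, F (-x) y = F x y
def OddX (F : ℝ → ℝ → ℝ) : Prop := ∀ x y, F (-x) y = -F x y

lemma EvenX.pdx {F : ℝ → ℝ → ℝ} (h : EvenX F) : OddX (pdx F) := by
  intro x y
  have key := deriv_comp_neg (f := fun t => F t y) (x := x)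
  have he : (fun t => F (-t) y) = fun t => F t y := by funext t; exact h t y
  rw [he] at key
  show deriv (fun t => F t y) (-x) = -deriv (fun t => F t y) x
  rw [key]; ring

lemma OddX.pdx {F : ℝ → ℝ → ℝ} (h : OddX F) : EvenX (pdx F) := by
  intro x y
  have key := deriv_comp_neg (f := fun t => F t y) (x := x)
  have he : (fun t => F (-t) y) = fun t => -F t y := by funext t; exact h t y
  rw [he] at key
  simp only [deriv.fun_neg] at key
  show deriv (fun t => F t y) (-x) = deriv (fun t => F t y) x
  linarith [key]

lemma EvenX.pdy {F : ℝ → ℝ → ℝ} (h : EvenX F) : EvenX (pdy F) := by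
  intro x y
  have he : (fun t => F (-x) t) = fun t => F x t := by funext t; exact h x t
  show deriv (fun t => F (-x) t) y = deriv (fun t => F x t) y
  rw [he]

lemma OddX.pdy {F : ℝ → ℝ → ℝ} (h : OddX F) : OddX (pdy F) := by
  intro x y
  have he : (fun t => F (-x) t) = fun t => -F x t := by funext t; exact h x t
  show deriv (fun t => F (-x) t) y = -deriv (fun t => F x t) y
  rw [he]
  simp [deriv.neg]

lemma OddX.zero {F : ℝ → ℝ → ℝ} (h : OddX F) (y : ℝ) : F 0 y = 0 := by
  have := h 0 y; rw [neg_zero] at this; linarith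

/-! ### continuity and derivative helpers -/

lemma contY (hF : ContDiff ℝ (⊤ : ℕ∞) (Function.uncurry F)) (x : ℝ) : Continuous (F x) := by
  have : Continuous (Function.uncurry F) := hF.continuous
  exact this.comp (Continuous.prodMk_right x)

lemma hasDX (hF : ContDiff ℝ (⊤ : ℕ∞) (Function.uncurry F)) (x y : ℝ) :
    HasDerivAt (fun t => F t y) (pdx F x y) x := by
  rw [pdx_eq hF]; exact hasDerivAt_slice_x hF x y

lemma hasDY (hF : ContDiff ℝ (⊤ : ℕ∞) (Function.uncurry F)) (x y : ℝ) :
    HasDerivAt (fun t => F x t) (pdy F x y) y := by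
  rw [pdy_eq hF]; exact hasDerivAt_slice_y hF x y

/-! ### integral helpers -/

lemma swap2 {f : ℝ → ℝ → ℝ} (hf : Continuous (Function.uncurry f)) {a b c d : ℝ}
    (hab : a ≤ b) (hcd : c ≤ d) :
    ∫ x in a..b, (∫ y in c..d, f x y) = ∫ y in c..d, (∫ x in a..b, f x y) := by
  simp_rw [intervalIntegral.integral_of_le hab, intervalIntegral.integral_of_le hcd]
  apply MeasureTheory.integral_integral_swap
  rw [Measure.prod_restrict]
  apply MeasureTheory.IntegrableOn.mono_set
    (t := (Set.Icc a b) ×ˢ (Set.Icc c d))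
  · exact hf.continuousOn.integrableOn_compact (isCompact_Icc.prod isCompact_Icc)
  · exact Set.prod_mono Set.Ioc_subset_Icc_self Set.Ioc_subset_Icc_self

/-- integration by parts on `[-1,1]` -/
lemma parts {u v u' v' : ℝ → ℝ} (hu : ∀ y, HasDerivAt u (u' y) y)
    (hv : ∀ y, HasDerivAt v (v' y) y) (hu' : Continuous u') (hv' : Continuous v') :
    ∫ y in (-1:ℝ)..1, u y * v' y
      = u 1 * v 1 - u (-1) * v (-1) - ∫ y in (-1:ℝ)..1, u' y * v y := by
  have hcu : Continuous u := continuous_iff_continuousAt.2 fun y => (hu y).continuousAt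
  have hcv : Continuous v := continuous_iff_continuousAt.2 fun y => (hv y).continuousAt
  have h := intervalIntegral.integral_deriv_mul_eq_sub (a := (-1:ℝ)) (b := 1)
      (fun y _ => hu y) (fun y _ => hv y)
      (hu'.intervalIntegrable _ _) (hv'.intervalIntegrable _ _)
  have hi1 : IntervalIntegrable (fun y => u' y * v y) volume (-1) 1 :=
    (hu'.mul hcv).intervalIntegrable _ _
  have hi2 : IntervalIntegrable (fun y => u y * v' y) volume (-1) 1 :=
    (hcu.mul hv').intervalIntegrable _ _
  rw [intervalIntegral.integral_add hi1 hi2] at h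
  linarith

/-- FTC on `[y, 1]` for the second variable. -/
lemma reprY {F : ℝ → ℝ → ℝ} (hF : ContDiff ℝ (⊤ : ℕ∞) (Function.uncurry F)) (x y : ℝ) :
    F x y = F x 1 - ∫ t in y..1, pdy F x t := by
  have h := intervalIntegral.integral_eq_sub_of_hasDerivAt
      (f := fun t => F x t) (f' := fun t => pdy F x t) (a := y) (b := 1)
      (fun t _ => hasDY hF x t)
      (((contDiff_pdy hF).continuous.comp (Continuous.prodMk_right x)).intervalIntegrable _ _)
  linarith

/-- nonnegative continuous function with vanishing integrals on all intervals in
`[a,∞)`-style families is zero -/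
lemma zero_of_integrals_zero {f : ℝ → ℝ} (hf : Continuous f) (h0 : ∀ t, 0 ≤ f t)
    {a b : ℝ} (hab : a < b) (hz : ∫ t in a..b, f t = 0) : ∀ t ∈ Set.Icc a b, f t = 0 := by
  have hIoo : ∀ t ∈ Set.Ioo a b, f t = 0 := by
    intro t ht
    by_contra hne
    have hpos : 0 < f t := lt_of_le_of_ne (h0 t) (Ne.symm hne)
    obtain ⟨δ, hδ, hball⟩ := Metric.continuousAt_iff.1 (hf.continuousAt (x := t)) (f t / 2)
      (by linarith)
    set c := max a (t - δ/2) with hc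
    set d := min b (t + δ/2) with hd
    have hcd : c < d := by
      have h1 : a < d := lt_min hab (by linarith [ht.1])
      have h2 : t - δ/2 < d := lt_min (by linarith [ht.2]) (by linarith)
      exact max_lt h1 h2
    have hsub : ∫ s in c..d, f s > 0 := by
      apply intervalIntegral.intervalIntegral_pos_of_pos_on
        (hf.intervalIntegrable _ _) _ hcd
      intro s hs
      have hc1 : t - δ/2 ≤ c := le_max_right _ _
      have hd2 : d ≤ t + δ/2 := min_le_right _ _
      have hd1 : dist s t < δ := by
        rw [Real.dist_eq, abs_lt]
        constructor
        · linarith [hs.1]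
        · linarith [hs.2]
      have := hball hd1
      rw [Real.dist_eq, abs_lt] at this
      linarith
    have h1 : (0:ℝ) ≤ ∫ s in a..c, f s :=
      intervalIntegral.integral_nonneg (le_max_left _ _) (fun u _ => h0 u)
    have h2 : (0:ℝ) ≤ ∫ s in d..b, f s :=
      intervalIntegral.integral_nonneg (min_le_left _ _) (fun u _ => h0 u)
    have hsplit : ∫ t in a..b, f t =
        (∫ s in a..c, f s) + (∫ s in c..d, f s) + (∫ s in d..b, f s) := by
      rw [intervalIntegral.integral_add_adjacent_intervals (hf.intervalIntegrable _ _)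
        (hf.intervalIntegrable _ _),
        intervalIntegral.integral_add_adjacent_intervals (hf.intervalIntegrable _ _)
        (hf.intervalIntegrable _ _)]
    rw [hsplit] at hz
    linarith
  intro t ht
  have hclos : Set.Icc a b ⊆ closure (Set.Ioo a b) := by
    rw [closure_Ioo hab.ne]
  have : f t ∈ f '' closure (Set.Ioo a b) := ⟨t, hclos ht, rfl⟩
  -- closure argument
  have hcl : t ∈ closure (Set.Ioo a b) := hclos ht
  have : ∀ s ∈ closure (Set.Ioo a b), f s = 0 := by
    intro s hs
    have : Set.Ioo a b ⊆ f ⁻¹' {0} := fun u hu => hIoo u hu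
    have hsub2 : closure (Set.Ioo a b) ⊆ f ⁻¹' {0} :=
      closure_minimal this (IsClosed.preimage hf isClosed_singleton)
    exact hsub2 hs
  exact this t hcl



/-- baby Cauchy-Schwarz: `(∫|f|)² ≤ 2∫f²` on `[-1,1]`. -/
lemma L1_sq_le {f : ℝ → ℝ} (hf : Continuous f) :
    (∫ y in (-1:ℝ)..1, |f y|) ^ 2 ≤ 2 * ∫ y in (-1:ℝ)..1, f y ^ 2 := by
  set I := ∫ y in (-1:ℝ)..1, |f y| with hI
  set R := ∫ y in (-1:ℝ)..1, f y ^ 2 with hR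
  have hIn : 0 ≤ I := intervalIntegral.integral_nonneg (by norm_num) (fun u _ => abs_nonneg _)
  have hRn : 0 ≤ R := intervalIntegral.integral_nonneg (by norm_num) (fun u _ => sq_nonneg _)
  have key : ∀ c : ℝ, 0 < c → I ≤ R / (2 * c) + c := by
    intro c hc
    have hmono : I ≤ ∫ y in (-1:ℝ)..1, (f y ^ 2 / (2 * c) + c / 2) := by
      apply intervalIntegral.integral_mono_on (by norm_num)
        (hf.abs.intervalIntegrable _ _)
        ((((hf.pow 2).div_const _).add continuous_const).intervalIntegrable _ _)
      intro u _
      have h2c : 2 * c * |f u| ≤ f u ^ 2 + c ^ 2 := by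
        nlinarith [sq_nonneg (|f u| - c), sq_abs (f u)]
      have hpos : (0:ℝ) < 2 * c := by linarith
      show |f u| ≤ f u ^ 2 / (2 * c) + c / 2
      rw [div_add_div _ _ (by linarith : (2*c) ≠ 0) (by norm_num : (2:ℝ) ≠ 0)]
      rw [le_div_iff₀ (by positivity)]
      nlinarith [h2c, hc]
    have heval : ∫ y in (-1:ℝ)..1, (f y ^ 2 / (2 * c) + c / 2) = R / (2 * c) + c := by
      rw [intervalIntegral.integral_add (f := fun y => f y ^ 2 / (2 * c)) (g := fun _ => c / 2)
          (((hf.pow 2).div_const _).intervalIntegrable _ _)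
          (continuous_const.intervalIntegrable _ _)]
      rw [intervalIntegral.integral_div, intervalIntegral.integral_const]
      norm_num
      ring
    linarith [hmono, heval.le, heval.ge]
  rcases eq_or_lt_of_le hRn with h0 | hpos
  · have hIz : I ≤ 0 := by
      by_contra h
      push_neg at h
      have h2 := key (I / 2) (by linarith)
      rw [← h0] at h2
      norm_num at h2
      linarith
    have : I = 0 := le_antisymm hIz hIn
    rw [this]
    nlinarith
  · set c := Real.sqrt (R / 2) with hcdef
    have hc : 0 < c := Real.sqrt_pos.2 (by linarith)
    have hc2 : c ^ 2 = R / 2 := Real.sq_sqrt (by linarith)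
    have hkey := key c hc
    have hrc : R / (2 * c) = c := by
      field_simp
      nlinarith [hc2]
    rw [hrc] at hkey
    nlinarith [hkey, hIn, hc2]

end PoiseuilleAux

open PoiseuilleAux

/-- the flux function whose derivative controls the energy -/
noncomputable def gg (ψ : ℝ → ℝ → ℝ) : ℝ → ℝ → ℝ := fun x y =>
  ψ x y * pdx (pdx (pdx ψ)) x y - pdx ψ x y * pdx (pdx ψ) x y
    - 2 * pdy ψ x y * pdy (pdx ψ) x y

noncomputable def DG (ψ : ℝ → ℝ → ℝ) : ℝ → ℝ → ℝ := fun x y =>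
  ψ x y * pdx (pdx (pdx (pdx ψ))) x y - (pdx (pdx ψ) x y) ^ 2
    - 2 * (pdy (pdx ψ) x y) ^ 2 - 2 * pdy ψ x y * pdy (pdx (pdx ψ)) x y

noncomputable def QQ (ψ : ℝ → ℝ → ℝ) : ℝ → ℝ := fun x =>
  ∫ y in (-1:ℝ)..1,
    ((pdx (pdx ψ) x y) ^ 2 + 2 * (pdy (pdx ψ) x y) ^ 2 + (pdy (pdy ψ) x y) ^ 2)

noncomputable def GG (ψ : ℝ → ℝ → ℝ) : ℝ → ℝ := fun x =>
  ∫ y in (-1:ℝ)..1, gg ψ x y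

noncomputable def RT (ψ : ℝ → ℝ → ℝ) : ℝ → ℝ := fun x =>
  ∫ y in (-1:ℝ)..1, (pdx (pdx (pdx ψ)) x y) ^ 2

section Main

variable {ψ : ℝ → ℝ → ℝ}

/-- biharmonicity from the equation and evenness -/
lemma biharm (hsmooth : ContDiff ℝ (⊤ : ℕ∞) (Function.uncurry ψ))
    (hsymm : ∀ x y : ℝ, ψ (-x) y = ψ x y)
    (heq : ∀ x : ℝ, ∀ y ∈ Set.Ioo (-1 : ℝ) 1,
      pdx (pdx (pdx (pdx ψ))) x y + 2 * pdy (pdy (pdx (pdx ψ))) x y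
          + pdy (pdy (pdy (pdy ψ))) x y
        - ((3 * (Φ:ℝ) / 4) * (1 - y ^ 2) * (pdy (pdy (pdx ψ)) x y + pdx (pdx (pdx ψ)) x y)
            + (3 * Φ / 2) * pdx ψ x y)
        + (pdx ψ x y * pdy (fun a b => pdx (pdx ψ) a b + pdy (pdy ψ) a b) x y
            - pdy ψ x y * pdx (fun a b => pdx (pdx ψ) a b + pdy (pdy ψ) a b) x y) = 0) :
    ∀ x : ℝ, ∀ y ∈ Set.Icc (-1 : ℝ) 1,
      pdx (pdx (pdx (pdx ψ))) x y + 2 * pdy (pdy (pdx (pdx ψ))) x y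
        + pdy (pdy (pdy (pdy ψ))) x y = 0 := by
  have hev : EvenX ψ := hsymm
  have hIoo : ∀ x : ℝ, ∀ y ∈ Set.Ioo (-1 : ℝ) 1,
      pdx (pdx (pdx (pdx ψ))) x y + 2 * pdy (pdy (pdx (pdx ψ))) x y
        + pdy (pdy (pdy (pdy ψ))) x y = 0 := by
    intro x y hy
    have h1 := heq x y hy
    have h2 := heq (-x) y hy
    -- parity rewrites in h2
    have e4 : pdx (pdx (pdx (pdx ψ))) (-x) y = pdx (pdx (pdx (pdx ψ))) x y :=
      hev.pdx.pdx.pdx.pdx x y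
    have e22 : pdy (pdy (pdx (pdx ψ))) (-x) y = pdy (pdy (pdx (pdx ψ))) x y :=
      hev.pdx.pdx.pdy.pdy x y
    have ey4 : pdy (pdy (pdy (pdy ψ))) (-x) y = pdy (pdy (pdy (pdy ψ))) x y :=
      hev.pdy.pdy.pdy.pdy x y
    have exyy : pdy (pdy (pdx ψ)) (-x) y = -pdy (pdy (pdx ψ)) x y := hev.pdx.pdy.pdy x y
    have ex3 : pdx (pdx (pdx ψ)) (-x) y = -pdx (pdx (pdx ψ)) x y := hev.pdx.pdx.pdx x y
    have ex1 : pdx ψ (-x) y = -pdx ψ x y := hev.pdx x y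
    have ey1 : pdy ψ (-x) y = pdy ψ x y := hev.pdy x y
    have hevH : EvenX (fun a b => pdx (pdx ψ) a b + pdy (pdy ψ) a b) := by
      intro a b
      have := hev.pdx.pdx a b
      have := hev.pdy.pdy a b
      simp only []
      rw [hev.pdx.pdx a b, hev.pdy.pdy a b]
    have eHy : pdy (fun a b => pdx (pdx ψ) a b + pdy (pdy ψ) a b) (-x) y
        = pdy (fun a b => pdx (pdx ψ) a b + pdy (pdy ψ) a b) x y := hevH.pdy x y
    have eHx : pdx (fun a b => pdx (pdx ψ) a b + pdy (pdy ψ) a b) (-x) y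
        = -pdx (fun a b => pdx (pdx ψ) a b + pdy (pdy ψ) a b) x y := hevH.pdx x y
    rw [e4, e22, ey4, exyy, ex3, ex1, ey1, eHy, eHx] at h2
    nlinarith [h1, h2]
  intro x y hy
  have hcont : Continuous (fun t : ℝ => pdx (pdx (pdx (pdx ψ))) x t
      + 2 * pdy (pdy (pdx (pdx ψ))) x t + pdy (pdy (pdy (pdy ψ))) x t) := by
    have c1 := contY (contDiff_pdx (contDiff_pdx (contDiff_pdx (contDiff_pdx hsmooth)))) x
    have c2 := contY (contDiff_pdy (contDiff_pdy (contDiff_pdx (contDiff_pdx hsmooth)))) x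
    have c3 := contY (contDiff_pdy (contDiff_pdy (contDiff_pdy (contDiff_pdy hsmooth)))) x
    exact (c1.add (continuous_const.mul c2)).add c3
  have hsub : Set.Icc (-1:ℝ) 1 ⊆ closure (Set.Ioo (-1:ℝ) 1) := by
    rw [closure_Ioo (by norm_num : (-1:ℝ) ≠ 1)]
  have hzero : closure (Set.Ioo (-1:ℝ) 1) ⊆
      (fun t : ℝ => pdx (pdx (pdx (pdx ψ))) x t
        + 2 * pdy (pdy (pdx (pdx ψ))) x t + pdy (pdy (pdy (pdy ψ))) x t) ⁻¹' {0} := by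
    apply closure_minimal
    · intro t ht
      exact hIoo x t ht
    · exact IsClosed.preimage hcont isClosed_singleton
  exact hzero (hsub hy)

lemma hasDerivAt_gg (hsmooth : ContDiff ℝ (⊤ : ℕ∞) (Function.uncurry ψ)) (x y : ℝ) :
    HasDerivAt (fun t => gg ψ t y) (DG ψ x y) x := by
  have hx := contDiff_pdx hsmooth
  have hy := contDiff_pdy hsmooth
  have hxx := contDiff_pdx hx
  have hU := contDiff_pdy hx
  have hT := contDiff_pdx hxx
  have h1 : HasDerivAt (fun t => ψ t y * pdx (pdx (pdx ψ)) t y)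
      (pdx ψ x y * pdx (pdx (pdx ψ)) x y + ψ x y * pdx (pdx (pdx (pdx ψ))) x y) x :=
    (hasDX hsmooth x y).mul (hasDX hT x y)
  have h2 : HasDerivAt (fun t => pdx ψ t y * pdx (pdx ψ) t y)
      (pdx (pdx ψ) x y * pdx (pdx ψ) x y + pdx ψ x y * pdx (pdx (pdx ψ)) x y) x :=
    (hasDX hx x y).mul (hasDX hxx x y)
  have h3 : HasDerivAt (fun t => 2 * (pdy ψ t y * pdy (pdx ψ) t y))
      (2 * (pdx (pdy ψ) x y * pdy (pdx ψ) x y + pdy ψ x y * pdx (pdy (pdx ψ)) x y)) x := by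
    have h := (hasDX hy x y).mul (hasDX hU x y)
    simpa using h.const_mul (2:ℝ)
  have h := (h1.sub h2).sub h3
  have hc1 : pdx (pdy ψ) x y = pdy (pdx ψ) x y := (pdx_pdy_comm hsmooth x y).symm
  have hc2 : pdx (pdy (pdx ψ)) x y = pdy (pdx (pdx ψ)) x y := (pdx_pdy_comm hx x y).symm
  have hfe : (fun t => gg ψ t y)
      = fun t => ψ t y * pdx (pdx (pdx ψ)) t y - pdx ψ t y * pdx (pdx ψ) t y
        - 2 * (pdy ψ t y * pdy (pdx ψ) t y) := by
    funext t
    simp only [gg]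
    ring
  rw [hc1, hc2] at h
  rw [hfe]
  have hD : DG ψ x y = pdx ψ x y * pdx (pdx (pdx ψ)) x y + ψ x y * pdx (pdx (pdx (pdx ψ))) x y
      - (pdx (pdx ψ) x y * pdx (pdx ψ) x y + pdx ψ x y * pdx (pdx (pdx ψ)) x y)
      - 2 * (pdy (pdx ψ) x y * pdy (pdx ψ) x y + pdy ψ x y * pdy (pdx (pdx ψ)) x y) := by
    simp only [DG]; ring
  rw [hD]; exact h

lemma int_DG_eq (hsmooth : ContDiff ℝ (⊤ : ℕ∞) (Function.uncurry ψ))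
    (hbh : ∀ x : ℝ, ∀ y ∈ Set.Icc (-1 : ℝ) 1,
      pdx (pdx (pdx (pdx ψ))) x y + 2 * pdy (pdy (pdx (pdx ψ))) x y
        + pdy (pdy (pdy (pdy ψ))) x y = 0)
    (hbc : ∀ x : ℝ, ψ x (-1) = 0 ∧ ψ x 1 = 0 ∧ pdx ψ x (-1) = 0 ∧ pdx ψ x 1 = 0 ∧
      pdy ψ x (-1) = 0 ∧ pdy ψ x 1 = 0) (x : ℝ) :
    ∫ y in (-1:ℝ)..1, DG ψ x y = -QQ ψ x := by
  have hx := contDiff_pdx hsmooth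
  have hy := contDiff_pdy hsmooth
  have hxx := contDiff_pdx hx
  have hU := contDiff_pdy hx
  have hyy := contDiff_pdy hy
  have hT := contDiff_pdx hxx
  have hW := contDiff_pdy hxx
  have hP4 := contDiff_pdx hT
  have hWy := contDiff_pdy hW
  have hyyy := contDiff_pdy hyy
  have hy4 := contDiff_pdy hyyy
  -- integration by parts pieces
  have parts1 : ∫ y in (-1:ℝ)..1, ψ x y * pdy (pdy (pdx (pdx ψ))) x y
      = -∫ y in (-1:ℝ)..1, pdy ψ x y * pdy (pdx (pdx ψ)) x y := by
    have h := parts (u := fun y => ψ x y) (u' := fun y => pdy ψ x y)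
      (v := fun y => pdy (pdx (pdx ψ)) x y) (v' := fun y => pdy (pdy (pdx (pdx ψ))) x y)
      (fun y => hasDY hsmooth x y) (fun y => hasDY hW x y) (contY hy x) (contY hWy x)
    simp only [(hbc x).2.1, (hbc x).1, zero_mul, mul_zero, sub_zero, zero_sub] at h
    exact h
  have parts2 : ∫ y in (-1:ℝ)..1, ψ x y * pdy (pdy (pdy (pdy ψ))) x y
      = -∫ y in (-1:ℝ)..1, pdy ψ x y * pdy (pdy (pdy ψ)) x y := by
    have h := parts (u := fun y => ψ x y) (u' := fun y => pdy ψ x y)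
      (v := fun y => pdy (pdy (pdy ψ)) x y) (v' := fun y => pdy (pdy (pdy (pdy ψ))) x y)
      (fun y => hasDY hsmooth x y) (fun y => hasDY hyyy x y) (contY hy x) (contY hy4 x)
    simp only [(hbc x).2.1, (hbc x).1, zero_mul, mul_zero, sub_zero, zero_sub] at h
    exact h
  have parts3 : ∫ y in (-1:ℝ)..1, pdy ψ x y * pdy (pdy (pdy ψ)) x y
      = -∫ y in (-1:ℝ)..1, pdy (pdy ψ) x y * pdy (pdy ψ) x y := by
    have h := parts (u := fun y => pdy ψ x y) (u' := fun y => pdy (pdy ψ) x y)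
      (v := fun y => pdy (pdy ψ) x y) (v' := fun y => pdy (pdy (pdy ψ)) x y)
      (fun y => hasDY hy x y) (fun y => hasDY hyy x y) (contY hyy x) (contY hyyy x)
    obtain ⟨b1, b2, b3, b4, b5, b6⟩ := hbc x
    simp only [b5, b6, zero_mul, mul_zero, sub_zero, zero_sub] at h
    exact h
  -- integrability
  have iP4 : IntervalIntegrable (fun y => ψ x y * pdx (pdx (pdx (pdx ψ))) x y) volume (-1) 1 :=
    ((contY hsmooth x).mul (contY hP4 x)).intervalIntegrable _ _
  have ixx : IntervalIntegrable (fun y => (pdx (pdx ψ) x y) ^ 2) volume (-1) 1 :=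
    (((contY hxx x)).pow 2).intervalIntegrable _ _
  have iU2 : IntervalIntegrable (fun y => 2 * (pdy (pdx ψ) x y) ^ 2) volume (-1) 1 :=
    (continuous_const.mul ((contY hU x).pow 2)).intervalIntegrable _ _
  have iyW : IntervalIntegrable (fun y => pdy ψ x y * pdy (pdx (pdx ψ)) x y) volume (-1) 1 :=
    ((contY hy x).mul (contY hW x)).intervalIntegrable _ _
  have iyW2 : IntervalIntegrable (fun y => 2 * (pdy ψ x y * pdy (pdx (pdx ψ)) x y))
      volume (-1) 1 := (continuous_const.mul ((contY hy x).mul (contY hW x))).intervalIntegrable _ _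
  have iWy : IntervalIntegrable (fun y => ψ x y * pdy (pdy (pdx (pdx ψ))) x y) volume (-1) 1 :=
    ((contY hsmooth x).mul (contY hWy x)).intervalIntegrable _ _
  have iWy2 : IntervalIntegrable (fun y => -2 * (ψ x y * pdy (pdy (pdx (pdx ψ))) x y))
      volume (-1) 1 :=
    (continuous_const.mul ((contY hsmooth x).mul (contY hWy x))).intervalIntegrable _ _
  have iY4 : IntervalIntegrable (fun y => ψ x y * pdy (pdy (pdy (pdy ψ))) x y) volume (-1) 1 :=
    ((contY hsmooth x).mul (contY hy4 x)).intervalIntegrable _ _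
  -- split the integral of DG
  have hsplit : ∫ y in (-1:ℝ)..1, DG ψ x y
      = (∫ y in (-1:ℝ)..1, ψ x y * pdx (pdx (pdx (pdx ψ))) x y)
        - (∫ y in (-1:ℝ)..1, (pdx (pdx ψ) x y) ^ 2)
        - (∫ y in (-1:ℝ)..1, 2 * (pdy (pdx ψ) x y) ^ 2)
        - (∫ y in (-1:ℝ)..1, 2 * (pdy ψ x y * pdy (pdx (pdx ψ)) x y)) := by
    have e1 : Set.EqOn (fun y => DG ψ x y)
        (fun y => ψ x y * pdx (pdx (pdx (pdx ψ))) x y - (pdx (pdx ψ) x y) ^ 2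
          - 2 * (pdy (pdx ψ) x y) ^ 2 - 2 * (pdy ψ x y * pdy (pdx (pdx ψ)) x y))
        (Set.uIcc (-1:ℝ) 1) := by
      intro y _
      simp only [DG]
      ring
    rw [intervalIntegral.integral_congr e1,
      intervalIntegral.integral_sub ((iP4.sub ixx).sub iU2) iyW2,
      intervalIntegral.integral_sub (iP4.sub ixx) iU2,
      intervalIntegral.integral_sub iP4 ixx]
  -- biharmonic substitution
  have hpc : ∫ y in (-1:ℝ)..1, ψ x y * pdx (pdx (pdx (pdx ψ))) x y
      = (∫ y in (-1:ℝ)..1, -2 * (ψ x y * pdy (pdy (pdx (pdx ψ))) x y))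
        - (∫ y in (-1:ℝ)..1, ψ x y * pdy (pdy (pdy (pdy ψ))) x y) := by
    have e2 : Set.EqOn (fun y => ψ x y * pdx (pdx (pdx (pdx ψ))) x y)
        (fun y => -2 * (ψ x y * pdy (pdy (pdx (pdx ψ))) x y)
          - ψ x y * pdy (pdy (pdy (pdy ψ))) x y) (Set.uIcc (-1:ℝ) 1) := by
      intro y hy
      rw [Set.uIcc_of_le (by norm_num : (-1:ℝ) ≤ 1)] at hy
      have hb := hbh x y hy
      have hb2 : pdx (pdx (pdx (pdx ψ))) x y
          = -2 * pdy (pdy (pdx (pdx ψ))) x y - pdy (pdy (pdy (pdy ψ))) x y := by linarith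
      simp only []
      rw [hb2]
      ring
    rw [intervalIntegral.integral_congr e2, intervalIntegral.integral_sub iWy2 iY4]
  have hconst1 : ∫ y in (-1:ℝ)..1, -2 * (ψ x y * pdy (pdy (pdx (pdx ψ))) x y)
      = -2 * ∫ y in (-1:ℝ)..1, ψ x y * pdy (pdy (pdx (pdx ψ))) x y :=
    intervalIntegral.integral_const_mul _ _
  have hconst2 : ∫ y in (-1:ℝ)..1, 2 * (pdy ψ x y * pdy (pdx (pdx ψ)) x y)
      = 2 * ∫ y in (-1:ℝ)..1, pdy ψ x y * pdy (pdx (pdx ψ)) x y :=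
    intervalIntegral.integral_const_mul _ _
  have hsq : ∫ y in (-1:ℝ)..1, pdy (pdy ψ) x y * pdy (pdy ψ) x y
      = ∫ y in (-1:ℝ)..1, (pdy (pdy ψ) x y) ^ 2 :=
    intervalIntegral.integral_congr (fun y _ => by ring)
  -- split QQ
  have iyy : IntervalIntegrable (fun y => (pdy (pdy ψ) x y) ^ 2) volume (-1) 1 :=
    ((contY hyy x).pow 2).intervalIntegrable _ _
  have hQQ : QQ ψ x = (∫ y in (-1:ℝ)..1, (pdx (pdx ψ) x y) ^ 2)
      + (∫ y in (-1:ℝ)..1, 2 * (pdy (pdx ψ) x y) ^ 2)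
      + (∫ y in (-1:ℝ)..1, (pdy (pdy ψ) x y) ^ 2) := by
    simp only [QQ]
    rw [intervalIntegral.integral_add (ixx.add iU2) iyy, intervalIntegral.integral_add ixx iU2]
  rw [hsplit, hpc, hconst1, hconst2, hQQ, parts1, parts2, parts3]
  linarith [hsq]


lemma cont_uncurry_gg (hsmooth : ContDiff ℝ (⊤ : ℕ∞) (Function.uncurry ψ)) :
    Continuous (Function.uncurry (gg ψ)) := by
  have c0 := hsmooth.continuous
  have cT := (contDiff_pdx (contDiff_pdx (contDiff_pdx hsmooth))).continuous
  have cx := (contDiff_pdx hsmooth).continuous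
  have cxx := (contDiff_pdx (contDiff_pdx hsmooth)).continuous
  have cy := (contDiff_pdy hsmooth).continuous
  have cU := (contDiff_pdy (contDiff_pdx hsmooth)).continuous
  exact ((c0.mul cT).sub (cx.mul cxx)).sub ((continuous_const.mul cy).mul cU)

lemma cont_uncurry_DG (hsmooth : ContDiff ℝ (⊤ : ℕ∞) (Function.uncurry ψ)) :
    Continuous (Function.uncurry (DG ψ)) := by
  have c0 := hsmooth.continuous
  have c4 := (contDiff_pdx (contDiff_pdx (contDiff_pdx (contDiff_pdx hsmooth)))).continuous
  have cxx := (contDiff_pdx (contDiff_pdx hsmooth)).continuous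
  have cU := (contDiff_pdy (contDiff_pdx hsmooth)).continuous
  have cy := (contDiff_pdy hsmooth).continuous
  have cW := (contDiff_pdy (contDiff_pdx (contDiff_pdx hsmooth))).continuous
  exact (((c0.mul c4).sub (cxx.pow 2)).sub
    (continuous_const.mul (cU.pow 2))).sub ((continuous_const.mul cy).mul cW)

lemma contQQ (hsmooth : ContDiff ℝ (⊤ : ℕ∞) (Function.uncurry ψ)) : Continuous (QQ ψ) := by
  apply intervalIntegral.continuous_parametric_intervalIntegral_of_continuous'
  have cxx := (contDiff_pdx (contDiff_pdx hsmooth)).continuous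
  have cU := (contDiff_pdy (contDiff_pdx hsmooth)).continuous
  have cyy := (contDiff_pdy (contDiff_pdy hsmooth)).continuous
  exact ((cxx.pow 2).add (continuous_const.mul (cU.pow 2))).add (cyy.pow 2)

lemma contGG (hsmooth : ContDiff ℝ (⊤ : ℕ∞) (Function.uncurry ψ)) : Continuous (GG ψ) := by
  apply intervalIntegral.continuous_parametric_intervalIntegral_of_continuous'
  exact cont_uncurry_gg hsmooth

lemma QQ_nonneg (x : ℝ) : 0 ≤ QQ ψ x := by
  apply intervalIntegral.integral_nonneg (by norm_num)
  intro u _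
  positivity

lemma GG_diff (hsmooth : ContDiff ℝ (⊤ : ℕ∞) (Function.uncurry ψ))
    (hbh : ∀ x : ℝ, ∀ y ∈ Set.Icc (-1 : ℝ) 1,
      pdx (pdx (pdx (pdx ψ))) x y + 2 * pdy (pdy (pdx (pdx ψ))) x y
        + pdy (pdy (pdy (pdy ψ))) x y = 0)
    (hbc : ∀ x : ℝ, ψ x (-1) = 0 ∧ ψ x 1 = 0 ∧ pdx ψ x (-1) = 0 ∧ pdx ψ x 1 = 0 ∧
      pdy ψ x (-1) = 0 ∧ pdy ψ x 1 = 0)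
    {a b : ℝ} (hab : a ≤ b) :
    GG ψ b - GG ψ a = -∫ x in a..b, QQ ψ x := by
  have cDG := cont_uncurry_DG hsmooth
  have cgg := cont_uncurry_gg hsmooth
  have hFTC : ∀ y : ℝ, ∫ x in a..b, DG ψ x y = gg ψ b y - gg ψ a y := by
    intro y
    apply intervalIntegral.integral_eq_sub_of_hasDerivAt
      (fun x _ => hasDerivAt_gg hsmooth x y)
    exact (cDG.comp (continuous_id.prodMk continuous_const)).intervalIntegrable _ _
  have i1 : IntervalIntegrable (fun y => gg ψ b y) volume (-1) 1 :=
    (cgg.comp (Continuous.prodMk_right b)).intervalIntegrable _ _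
  have i2 : IntervalIntegrable (fun y => gg ψ a y) volume (-1) 1 :=
    (cgg.comp (Continuous.prodMk_right a)).intervalIntegrable _ _
  have step1 : GG ψ b - GG ψ a = ∫ y in (-1:ℝ)..1, (gg ψ b y - gg ψ a y) := by
    rw [intervalIntegral.integral_sub i1 i2]
    rfl
  have step2 : ∫ y in (-1:ℝ)..1, (gg ψ b y - gg ψ a y)
      = ∫ y in (-1:ℝ)..1, ∫ x in a..b, DG ψ x y :=
    intervalIntegral.integral_congr (fun y _ => (hFTC y).symm)
  have step3 : ∫ y in (-1:ℝ)..1, ∫ x in a..b, DG ψ x y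
      = ∫ x in a..b, ∫ y in (-1:ℝ)..1, DG ψ x y :=
    (swap2 cDG hab (by norm_num)).symm
  have step4 : ∫ x in a..b, ∫ y in (-1:ℝ)..1, DG ψ x y = ∫ x in a..b, -QQ ψ x :=
    intervalIntegral.integral_congr (fun x _ => int_DG_eq hsmooth hbh hbc x)
  rw [step1, step2, step3, step4, intervalIntegral.integral_neg]

lemma GG_zero (hsymm : ∀ x y : ℝ, ψ (-x) y = ψ x y) : GG ψ 0 = 0 := by
  have hev : EvenX ψ := hsymm
  have h0 : ∀ y : ℝ, gg ψ 0 y = 0 := by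
    intro y
    have h1 : pdx ψ 0 y = 0 := hev.pdx.zero y
    have h2 : pdx (pdx (pdx ψ)) 0 y = 0 := hev.pdx.pdx.pdx.zero y
    have h3 : pdy (pdx ψ) 0 y = 0 := hev.pdx.pdy.zero y
    simp only [gg, h1, h2, h3, mul_zero, zero_mul, sub_zero]
  have : GG ψ 0 = ∫ y in (-1:ℝ)..1, (0:ℝ) :=
    intervalIntegral.integral_congr (fun y _ => h0 y)
  simpa using this

lemma QQ_even (hsmooth : ContDiff ℝ (⊤ : ℕ∞) (Function.uncurry ψ))
    (hsymm : ∀ x y : ℝ, ψ (-x) y = ψ x y) (x : ℝ) : QQ ψ (-x) = QQ ψ x := by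
  have hev : EvenX ψ := hsymm
  apply intervalIntegral.integral_congr
  intro y _
  simp only []
  rw [hev.pdx.pdx x y, hev.pdx.pdy x y, hev.pdy.pdy x y]
  ring


/-- a function vanishing at `y = 1` is bounded by the integral of its `y`-derivative -/
lemma abs_le_intabs {F : ℝ → ℝ → ℝ} (hF : ContDiff ℝ (⊤ : ℕ∞) (Function.uncurry F))
    (hb : ∀ x, F x 1 = 0) (x : ℝ) {y : ℝ} (hy : y ∈ Set.Icc (-1:ℝ) 1) :
    |F x y| ≤ ∫ t in (-1:ℝ)..1, |pdy F x t| := by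
  have hre := reprY hF x y
  rw [hb x] at hre
  have h1 : |F x y| ≤ ∫ t in y..1, |pdy F x t| := by
    rw [hre]
    simp only [zero_sub, abs_neg]
    exact intervalIntegral.abs_integral_le_integral_abs hy.2
  have hsplit : ∫ t in (-1:ℝ)..1, |pdy F x t|
      = (∫ t in (-1:ℝ)..y, |pdy F x t|) + ∫ t in y..1, |pdy F x t| :=
    (intervalIntegral.integral_add_adjacent_intervals
      (((contY (contDiff_pdy hF) x).abs).intervalIntegrable _ _)
      (((contY (contDiff_pdy hF) x).abs).intervalIntegrable _ _)).symm
  have h2 : (0:ℝ) ≤ ∫ t in (-1:ℝ)..y, |pdy F x t| :=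
    intervalIntegral.integral_nonneg hy.1 (fun u _ => abs_nonneg _)
  linarith

lemma abs_psi_le (hsmooth : ContDiff ℝ (⊤ : ℕ∞) (Function.uncurry ψ))
    (hbc : ∀ x : ℝ, ψ x (-1) = 0 ∧ ψ x 1 = 0 ∧ pdx ψ x (-1) = 0 ∧ pdx ψ x 1 = 0 ∧
      pdy ψ x (-1) = 0 ∧ pdy ψ x 1 = 0)
    (x : ℝ) {y : ℝ} (hy : y ∈ Set.Icc (-1:ℝ) 1) :
    |ψ x y| ≤ 2 * ∫ t in (-1:ℝ)..1, |pdy (pdy ψ) x t| := by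
  set Ayy := ∫ t in (-1:ℝ)..1, |pdy (pdy ψ) x t| with hAyy
  have hAnn : 0 ≤ Ayy :=
    intervalIntegral.integral_nonneg (by norm_num) (fun u _ => abs_nonneg _)
  have hre := reprY hsmooth x y
  rw [(hbc x).2.1] at hre
  have h1 : |ψ x y| ≤ ∫ t in y..1, |pdy ψ x t| := by
    rw [hre]
    simp only [zero_sub, abs_neg]
    exact intervalIntegral.abs_integral_le_integral_abs hy.2
  have h2 : ∫ t in y..1, |pdy ψ x t| ≤ ∫ t in y..1, Ayy := by
    apply intervalIntegral.integral_mono_on hy.2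
      (((contY (contDiff_pdy hsmooth) x).abs).intervalIntegrable _ _)
      (continuous_const.intervalIntegrable _ _)
    intro t ht
    exact abs_le_intabs (contDiff_pdy hsmooth) (fun x' => (hbc x').2.2.2.2.2) x
      ⟨le_trans hy.1 ht.1, ht.2⟩
  have h3 : ∫ t in y..1, Ayy = (1 - y) * Ayy := by
    rw [intervalIntegral.integral_const]
    simp [smul_eq_mul]
  have hy2 : 1 - y ≤ 2 := by linarith [hy.1]
  nlinarith [h1, h2, h3, hAnn]

set_option maxHeartbeats 2000000 in
lemma keybound (hsmooth : ContDiff ℝ (⊤ : ℕ∞) (Function.uncurry ψ))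
    (hbc : ∀ x : ℝ, ψ x (-1) = 0 ∧ ψ x 1 = 0 ∧ pdx ψ x (-1) = 0 ∧ pdx ψ x 1 = 0 ∧
      pdy ψ x (-1) = 0 ∧ pdy ψ x 1 = 0)
    {ε : ℝ} (hε : 0 < ε) (x : ℝ) :
    -GG ψ x ≤ 2 * ε * RT ψ x + (2 / ε + 5) * QQ ψ x := by
  have hx := contDiff_pdx hsmooth
  have hy := contDiff_pdy hsmooth
  have hxx := contDiff_pdx hx
  have hU := contDiff_pdy hx
  have hyy := contDiff_pdy hy
  have hT := contDiff_pdx hxx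
  set Ayy := ∫ t in (-1:ℝ)..1, |pdy (pdy ψ) x t| with hAyydef
  set AU := ∫ t in (-1:ℝ)..1, |pdy (pdx ψ) x t| with hAUdef
  set AT := ∫ t in (-1:ℝ)..1, |pdx (pdx (pdx ψ)) x t| with hATdef
  set Axx := ∫ t in (-1:ℝ)..1, |pdx (pdx ψ) x t| with hAxxdef
  have hAyy0 : 0 ≤ Ayy :=
    intervalIntegral.integral_nonneg (by norm_num) (fun u _ => abs_nonneg _)
  have hAU0 : 0 ≤ AU :=
    intervalIntegral.integral_nonneg (by norm_num) (fun u _ => abs_nonneg _)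
  have hAT0 : 0 ≤ AT :=
    intervalIntegral.integral_nonneg (by norm_num) (fun u _ => abs_nonneg _)
  have hAxx0 : 0 ≤ Axx :=
    intervalIntegral.integral_nonneg (by norm_num) (fun u _ => abs_nonneg _)
  have hgabs : ∀ y ∈ Set.Icc (-1:ℝ) 1, |gg ψ x y| ≤
      2 * Ayy * |pdx (pdx (pdx ψ)) x y| + AU * |pdx (pdx ψ) x y|
        + 2 * Ayy * |pdy (pdx ψ) x y| := by
    intro y hy'
    have b1 : |ψ x y| ≤ 2 * Ayy := abs_psi_le hsmooth hbc x hy'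
    have b2 : |pdx ψ x y| ≤ AU :=
      abs_le_intabs hx (fun x' => (hbc x').2.2.2.1) x hy'
    have b3 : |pdy ψ x y| ≤ Ayy :=
      abs_le_intabs hy (fun x' => (hbc x').2.2.2.2.2) x hy'
    have htri : |gg ψ x y| ≤ |ψ x y| * |pdx (pdx (pdx ψ)) x y|
        + |pdx ψ x y| * |pdx (pdx ψ) x y| + 2 * |pdy ψ x y| * |pdy (pdx ψ) x y| := by
      simp only [gg]
      calc |ψ x y * pdx (pdx (pdx ψ)) x y - pdx ψ x y * pdx (pdx ψ) x y
            - 2 * pdy ψ x y * pdy (pdx ψ) x y|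
          ≤ |ψ x y * pdx (pdx (pdx ψ)) x y - pdx ψ x y * pdx (pdx ψ) x y|
            + |2 * pdy ψ x y * pdy (pdx ψ) x y| := abs_sub _ _
        _ ≤ |ψ x y * pdx (pdx (pdx ψ)) x y| + |pdx ψ x y * pdx (pdx ψ) x y|
            + |2 * pdy ψ x y * pdy (pdx ψ) x y| := by
            linarith [abs_sub (ψ x y * pdx (pdx (pdx ψ)) x y) (pdx ψ x y * pdx (pdx ψ) x y)]
        _ = |ψ x y| * |pdx (pdx (pdx ψ)) x y| + |pdx ψ x y| * |pdx (pdx ψ) x y|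
            + 2 * |pdy ψ x y| * |pdy (pdx ψ) x y| := by
            rw [abs_mul, abs_mul, abs_mul, abs_mul]
            simp [abs_of_nonneg]
    have m1 : |ψ x y| * |pdx (pdx (pdx ψ)) x y| ≤ 2 * Ayy * |pdx (pdx (pdx ψ)) x y| :=
      mul_le_mul_of_nonneg_right b1 (abs_nonneg _)
    have m2 : |pdx ψ x y| * |pdx (pdx ψ) x y| ≤ AU * |pdx (pdx ψ) x y| :=
      mul_le_mul_of_nonneg_right b2 (abs_nonneg _)
    have m3 : 2 * |pdy ψ x y| * |pdy (pdx ψ) x y| ≤ 2 * Ayy * |pdy (pdx ψ) x y| := by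
      have := mul_le_mul_of_nonneg_right b3 (abs_nonneg (pdy (pdx ψ) x y))
      nlinarith [this]
    linarith
  have hGb : -GG ψ x ≤ ∫ y in (-1:ℝ)..1, |gg ψ x y| := by
    have h1 : -GG ψ x ≤ |GG ψ x| := neg_le_abs _
    have h2 : |GG ψ x| ≤ ∫ y in (-1:ℝ)..1, |gg ψ x y| :=
      intervalIntegral.abs_integral_le_integral_abs (by norm_num)
    linarith
  have hmono : ∫ y in (-1:ℝ)..1, |gg ψ x y|
      ≤ ∫ y in (-1:ℝ)..1, (2 * Ayy * |pdx (pdx (pdx ψ)) x y| + AU * |pdx (pdx ψ) x y|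
        + 2 * Ayy * |pdy (pdx ψ) x y|) := by
    apply intervalIntegral.integral_mono_on (by norm_num)
      (((cont_uncurry_gg hsmooth).comp (Continuous.prodMk_right x)).abs.intervalIntegrable _ _)
    · exact (((continuous_const.mul (contY hT x).abs).add
        (continuous_const.mul (contY hxx x).abs)).add
        (continuous_const.mul (contY hU x).abs)).intervalIntegrable _ _
    · exact hgabs
  have heval : ∫ y in (-1:ℝ)..1, (2 * Ayy * |pdx (pdx (pdx ψ)) x y| + AU * |pdx (pdx ψ) x y|
      + 2 * Ayy * |pdy (pdx ψ) x y|) = 2 * Ayy * AT + AU * Axx + 2 * Ayy * AU := by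
    rw [intervalIntegral.integral_add
        (f := fun y => 2 * Ayy * |pdx (pdx (pdx ψ)) x y| + AU * |pdx (pdx ψ) x y|)
        (g := fun y => 2 * Ayy * |pdy (pdx ψ) x y|)
        (((continuous_const.mul (contY hT x).abs).add
          (continuous_const.mul (contY hxx x).abs)).intervalIntegrable _ _)
        ((continuous_const.mul (contY hU x).abs).intervalIntegrable _ _),
      intervalIntegral.integral_add
        (f := fun y => 2 * Ayy * |pdx (pdx (pdx ψ)) x y|) (g := fun y => AU * |pdx (pdx ψ) x y|)
        ((continuous_const.mul (contY hT x).abs).intervalIntegrable _ _)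
        ((continuous_const.mul (contY hxx x).abs).intervalIntegrable _ _),
      intervalIntegral.integral_const_mul, intervalIntegral.integral_const_mul,
      intervalIntegral.integral_const_mul]
  have hCS_T : AT ^ 2 ≤ 2 * RT ψ x := L1_sq_le (contY hT x)
  have hCS_yy : Ayy ^ 2 ≤ 2 * ∫ y in (-1:ℝ)..1, (pdy (pdy ψ) x y) ^ 2 :=
    L1_sq_le (contY hyy x)
  have hCS_U : AU ^ 2 ≤ 2 * ∫ y in (-1:ℝ)..1, (pdy (pdx ψ) x y) ^ 2 :=
    L1_sq_le (contY hU x)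
  have hCS_xx : Axx ^ 2 ≤ 2 * ∫ y in (-1:ℝ)..1, (pdx (pdx ψ) x y) ^ 2 :=
    L1_sq_le (contY hxx x)
  have iQ : IntervalIntegrable (fun y => (pdx (pdx ψ) x y) ^ 2 + 2 * (pdy (pdx ψ) x y) ^ 2
      + (pdy (pdy ψ) x y) ^ 2) volume (-1) 1 :=
    ((((contY hxx x).pow 2).add (continuous_const.mul ((contY hU x).pow 2))).add
      ((contY hyy x).pow 2)).intervalIntegrable _ _
  have hc_yy : ∫ y in (-1:ℝ)..1, (pdy (pdy ψ) x y) ^ 2 ≤ QQ ψ x := by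
    apply intervalIntegral.integral_mono_on (by norm_num)
      (((contY hyy x).pow 2).intervalIntegrable _ _) iQ
    intro u _
    simp only [Pi.add_apply, Pi.pow_apply, Pi.mul_apply]
    nlinarith [sq_nonneg (pdx (pdx ψ) x u), sq_nonneg (pdy (pdx ψ) x u)]
  have hc_U : 2 * ∫ y in (-1:ℝ)..1, (pdy (pdx ψ) x y) ^ 2 ≤ QQ ψ x := by
    have h := intervalIntegral.integral_mono_on (by norm_num : (-1:ℝ) ≤ 1)
      ((continuous_const.mul ((contY hU x).pow 2)).intervalIntegrable _ _) iQ
      (fun u _ => by simp only [Pi.add_apply, Pi.pow_apply, Pi.mul_apply]; nlinarith [sq_nonneg (pdx (pdx ψ) x u), sq_nonneg (pdy (pdy ψ) x u)])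
    simp only [Pi.mul_apply, Pi.pow_apply] at h
    rw [intervalIntegral.integral_const_mul] at h
    exact h
  have hc_xx : ∫ y in (-1:ℝ)..1, (pdx (pdx ψ) x y) ^ 2 ≤ QQ ψ x := by
    apply intervalIntegral.integral_mono_on (by norm_num)
      (((contY hxx x).pow 2).intervalIntegrable _ _) iQ
    intro u _
    simp only [Pi.add_apply, Pi.pow_apply, Pi.mul_apply]
    nlinarith [sq_nonneg (pdy (pdy ψ) x u), sq_nonneg (pdy (pdx ψ) x u)]
  have hQ0 : 0 ≤ QQ ψ x := QQ_nonneg x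
  have hRT0 : 0 ≤ RT ψ x :=
    intervalIntegral.integral_nonneg (by norm_num) (fun u _ => sq_nonneg _)
  have hAyy2 : Ayy ^ 2 ≤ 2 * QQ ψ x := by linarith
  have hAU2 : AU ^ 2 ≤ QQ ψ x := by linarith
  have hAxx2 : Axx ^ 2 ≤ 2 * QQ ψ x := by linarith
  have key1 : 2 * Ayy * AT ≤ ε * AT ^ 2 + Ayy ^ 2 / ε := by
    rw [← sub_nonneg]
    have he : ε * AT ^ 2 + Ayy ^ 2 / ε - 2 * Ayy * AT = (ε * AT - Ayy) ^ 2 / ε := by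
      field_simp
      ring
    rw [he]
    positivity
  have key2 : AU * Axx ≤ (AU ^ 2 + Axx ^ 2) / 2 := by nlinarith [sq_nonneg (AU - Axx)]
  have key3 : 2 * Ayy * AU ≤ Ayy ^ 2 + AU ^ 2 := by nlinarith [sq_nonneg (Ayy - AU)]
  have hdiv : Ayy ^ 2 / ε ≤ 2 * QQ ψ x / ε := (div_le_div_iff_of_pos_right hε).mpr hAyy2
  have hεAT : ε * AT ^ 2 ≤ ε * (2 * RT ψ x) := mul_le_mul_of_nonneg_left hCS_T hε.le
  calc -GG ψ x ≤ ∫ y in (-1:ℝ)..1, |gg ψ x y| := hGb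
    _ ≤ _ := hmono
    _ = 2 * Ayy * AT + AU * Axx + 2 * Ayy * AU := heval
    _ ≤ 2 * ε * RT ψ x + (2 / ε + 5) * QQ ψ x := by
        have hq : 2 * QQ ψ x / ε = 2 / ε * QQ ψ x := by ring
        rw [hq] at hdiv
        nlinarith [key1, key2, key3, hεAT, hdiv, hAU2, hAxx2, hAyy2, hQ0]



set_option maxHeartbeats 2000000 in
/-- Uniqueness of the Poiseuille flow for an arbitrary flux `Φ > 0` (Corollary 6.2 of the
paper, stream-function form): with `F(y) = (3Φ/4)(1 − y²)`, if the stream function `ψ` of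
the perturbation is smooth, has uniformly locally bounded Dirichlet integrals (orders 1 to
3), is even in `x` (symmetry class (X1)), solves
`Δ²ψ − [F(y)(ψ_xyy + ψ_xxx) + (3Φ/2)ψ_x] + (ψ_x(Δψ)_y − ψ_y(Δψ)_x) = 0` in `S = ℝ × (-1,1)`,
and `ψ = ψ_x = ψ_y = 0` on `y = ±1`, then `ψ ≡ 0`; i.e. the Poiseuille flow
`u_Φ = (3Φ/4)(1−y²)e₁`, `p_Φ = −(3Φ/2)x` is the only solution in this class. -/
theorem stmt_16 (Φ : ℝ) (hΦ : 0 < Φ) (ψ : ℝ → ℝ → ℝ)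
    (hsmooth : ContDiff ℝ (⊤ : ℕ∞) (Function.uncurry ψ))
    (M : ℝ) (hM : 0 < M)
    (hloc : ∀ a : ℝ,
      (∫ x in a..(a + 1), ∫ y in (-1 : ℝ)..1,
          ((pdx ψ x y) ^ 2 + (pdy ψ x y) ^ 2
            + (pdx (pdx ψ) x y) ^ 2 + (pdy (pdx ψ) x y) ^ 2 + (pdy (pdy ψ) x y) ^ 2
            + (pdx (pdx (pdx ψ)) x y) ^ 2 + (pdy (pdx (pdx ψ)) x y) ^ 2
            + (pdy (pdy (pdx ψ)) x y) ^ 2 + (pdy (pdy (pdy ψ)) x y) ^ 2)) ≤ M)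
    (hsymm : ∀ x y : ℝ, ψ (-x) y = ψ x y)
    (heq : ∀ x : ℝ, ∀ y ∈ Set.Ioo (-1 : ℝ) 1,
      pdx (pdx (pdx (pdx ψ))) x y + 2 * pdy (pdy (pdx (pdx ψ))) x y
          + pdy (pdy (pdy (pdy ψ))) x y
        - ((3 * Φ / 4) * (1 - y ^ 2) * (pdy (pdy (pdx ψ)) x y + pdx (pdx (pdx ψ)) x y)
            + (3 * Φ / 2) * pdx ψ x y)
        + (pdx ψ x y * pdy (fun a b => pdx (pdx ψ) a b + pdy (pdy ψ) a b) x y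
            - pdy ψ x y * pdx (fun a b => pdx (pdx ψ) a b + pdy (pdy ψ) a b) x y) = 0)
    (hbc : ∀ x : ℝ, ψ x (-1) = 0 ∧ ψ x 1 = 0 ∧ pdx ψ x (-1) = 0 ∧ pdx ψ x 1 = 0 ∧
      pdy ψ x (-1) = 0 ∧ pdy ψ x 1 = 0) :
    ∀ x : ℝ, ∀ y ∈ Set.Icc (-1 : ℝ) 1, ψ x y = 0 := by
  have hx := contDiff_pdx hsmooth
  have hy := contDiff_pdy hsmooth
  have hxx := contDiff_pdx hx
  have hU := contDiff_pdy hx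
  have hyy := contDiff_pdy hy
  have hT := contDiff_pdx hxx
  have hbh := biharm hsmooth hsymm heq
  have cQQ : Continuous (QQ ψ) := contQQ hsmooth
  have cGG : Continuous (GG ψ) := contGG hsmooth
  have cRT : Continuous (RT ψ) := by
    apply intervalIntegral.continuous_parametric_intervalIntegral_of_continuous'
    exact (hT.continuous.pow 2)
  set s : ℝ → ℝ := fun b => ∫ x in (0:ℝ)..b, QQ ψ x with hsdef
  have hGs : ∀ b : ℝ, 0 ≤ b → GG ψ b = -s b := by
    intro b hb
    have h := GG_diff hsmooth hbh hbc hb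
    rw [GG_zero hsymm] at h
    simp only [hsdef]
    linarith
  have hadj : ∀ a b : ℝ, s a + (∫ x in a..b, QQ ψ x) = s b := by
    intro a b
    exact intervalIntegral.integral_add_adjacent_intervals
      (cQQ.intervalIntegrable _ _) (cQQ.intervalIntegrable _ _)
  have hsmono : ∀ a b : ℝ, a ≤ b → s a ≤ s b := by
    intro a b hab
    have h := hadj a b
    have h2 : 0 ≤ ∫ x in a..b, QQ ψ x :=
      intervalIntegral.integral_nonneg hab (fun u _ => QQ_nonneg u)
    linarith
  have hs0 : ∀ b : ℝ, 0 ≤ b → 0 ≤ s b := by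
    intro b hb
    exact intervalIntegral.integral_nonneg hb (fun u _ => QQ_nonneg u)
  set SI : ℝ → ℝ := fun x => ∫ y in (-1:ℝ)..1,
      ((pdx ψ x y) ^ 2 + (pdy ψ x y) ^ 2
        + (pdx (pdx ψ) x y) ^ 2 + (pdy (pdx ψ) x y) ^ 2 + (pdy (pdy ψ) x y) ^ 2
        + (pdx (pdx (pdx ψ)) x y) ^ 2 + (pdy (pdx (pdx ψ)) x y) ^ 2
        + (pdy (pdy (pdx ψ)) x y) ^ 2 + (pdy (pdy (pdy ψ)) x y) ^ 2) with hSIdef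
  have cSum : Continuous (fun p : ℝ × ℝ =>
      (pdx ψ p.1 p.2) ^ 2 + (pdy ψ p.1 p.2) ^ 2
        + (pdx (pdx ψ) p.1 p.2) ^ 2 + (pdy (pdx ψ) p.1 p.2) ^ 2 + (pdy (pdy ψ) p.1 p.2) ^ 2
        + (pdx (pdx (pdx ψ)) p.1 p.2) ^ 2 + (pdy (pdx (pdx ψ)) p.1 p.2) ^ 2
        + (pdy (pdy (pdx ψ)) p.1 p.2) ^ 2 + (pdy (pdy (pdy ψ)) p.1 p.2) ^ 2) := by
    have c1 := hx.continuous
    have c2 := hy.continuous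
    have c3 := hxx.continuous
    have c4 := hU.continuous
    have c5 := hyy.continuous
    have c6 := hT.continuous
    have c7 := (contDiff_pdy hxx).continuous
    have c8 := (contDiff_pdy hU).continuous
    have c9 := (contDiff_pdy hyy).continuous
    exact ((((((((c1.pow 2).add (c2.pow 2)).add (c3.pow 2)).add (c4.pow 2)).add
      (c5.pow 2)).add (c6.pow 2)).add (c7.pow 2)).add (c8.pow 2)).add (c9.pow 2)
  have cSI : Continuous SI := by
    apply intervalIntegral.continuous_parametric_intervalIntegral_of_continuous'
    exact cSum
  have hRTle : ∀ x : ℝ, RT ψ x ≤ SI x := by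
    intro x
    apply intervalIntegral.integral_mono_on (by norm_num)
      (((hT.continuous.comp (Continuous.prodMk_right x)).pow 2).intervalIntegrable _ _)
      ((cSum.comp (Continuous.prodMk_right x)).intervalIntegrable _ _)
    intro u _
    simp only [Function.comp_apply, Function.uncurry_apply_pair, Pi.pow_apply]
    nlinarith [sq_nonneg (pdx ψ x u), sq_nonneg (pdy ψ x u), sq_nonneg (pdx (pdx ψ) x u),
      sq_nonneg (pdy (pdx ψ) x u), sq_nonneg (pdy (pdy ψ) x u),
      sq_nonneg (pdy (pdx (pdx ψ)) x u), sq_nonneg (pdy (pdy (pdx ψ)) x u),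
      sq_nonneg (pdy (pdy (pdy ψ)) x u)]
  have hQQle : ∀ x : ℝ, QQ ψ x ≤ 2 * SI x := by
    intro x
    have h : QQ ψ x ≤ ∫ y in (-1:ℝ)..1, 2 * ((pdx ψ x y) ^ 2 + (pdy ψ x y) ^ 2
        + (pdx (pdx ψ) x y) ^ 2 + (pdy (pdx ψ) x y) ^ 2 + (pdy (pdy ψ) x y) ^ 2
        + (pdx (pdx (pdx ψ)) x y) ^ 2 + (pdy (pdx (pdx ψ)) x y) ^ 2
        + (pdy (pdy (pdx ψ)) x y) ^ 2 + (pdy (pdy (pdy ψ)) x y) ^ 2) := by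
      apply intervalIntegral.integral_mono_on (by norm_num)
        (((((hxx.continuous.comp (Continuous.prodMk_right x)).pow 2).add
          (continuous_const.mul ((hU.continuous.comp (Continuous.prodMk_right x)).pow 2))).add
          ((hyy.continuous.comp (Continuous.prodMk_right x)).pow 2)).intervalIntegrable _ _)
        ((continuous_const.mul (cSum.comp (Continuous.prodMk_right x))).intervalIntegrable _ _)
      intro u _
      simp only [Function.comp_apply, Function.uncurry_apply_pair, Pi.pow_apply, Pi.add_apply,
        Pi.mul_apply]
      nlinarith [sq_nonneg (pdx ψ x u), sq_nonneg (pdy ψ x u), sq_nonneg (pdx (pdx ψ) x u),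
        sq_nonneg (pdy (pdx ψ) x u), sq_nonneg (pdy (pdy ψ) x u),
        sq_nonneg (pdx (pdx (pdx ψ)) x u), sq_nonneg (pdy (pdx (pdx ψ)) x u),
        sq_nonneg (pdy (pdy (pdx ψ)) x u), sq_nonneg (pdy (pdy (pdy ψ)) x u)]
    rw [intervalIntegral.integral_const_mul] at h
    exact h
  have hRTcell : ∀ a : ℝ, ∫ x in a..(a+1), RT ψ x ≤ M := by
    intro a
    have h1 : ∫ x in a..(a+1), RT ψ x ≤ ∫ x in a..(a+1), SI x := by
      apply intervalIntegral.integral_mono_on (by linarith)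
        (cRT.intervalIntegrable _ _) (cSI.intervalIntegrable _ _)
      exact fun u _ => hRTle u
    exact h1.trans (hloc a)
  have hQcell : ∀ a : ℝ, ∫ x in a..(a+1), QQ ψ x ≤ 2 * M := by
    intro a
    have h1 : ∫ x in a..(a+1), QQ ψ x ≤ ∫ x in a..(a+1), 2 * SI x := by
      apply intervalIntegral.integral_mono_on (by linarith)
        (cQQ.intervalIntegrable _ _) ((continuous_const.mul cSI).intervalIntegrable _ _)
      exact fun u _ => hQQle u
    rw [intervalIntegral.integral_const_mul] at h1
    have h2 : ∫ x in a..(a+1), SI x ≤ M := hloc a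
    linarith
  have master : ∀ ε : ℝ, 0 < ε → ∀ b : ℝ, 0 ≤ b →
      s b ≤ 2 * ε * M + (2 / ε + 5) * (s (b+1) - s b) := by
    intro ε hε b hb
    have h1 : s b ≤ ∫ x in b..(b+1), -GG ψ x := by
      have hc : ∫ x in b..(b+1), (s b : ℝ) = s b := by
        rw [intervalIntegral.integral_const]
        simp
      rw [← hc]
      apply intervalIntegral.integral_mono_on (by linarith)
        (intervalIntegrable_const) ((cGG.neg).intervalIntegrable _ _)
      intro u hu
      have h2 : s b ≤ s u := hsmono b u hu.1
      have h3 : GG ψ u = -s u := hGs u (le_trans hb hu.1)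
      simp only [Pi.neg_apply]
      linarith
    have h2 : ∫ x in b..(b+1), -GG ψ x
        ≤ ∫ x in b..(b+1), (2 * ε * RT ψ x + (2 / ε + 5) * QQ ψ x) := by
      apply intervalIntegral.integral_mono_on (by linarith)
        ((cGG.neg).intervalIntegrable _ _)
        (((continuous_const.mul cRT).add
          (continuous_const.mul cQQ)).intervalIntegrable _ _)
      intro u _
      exact keybound hsmooth hbc hε u
    have h3 : ∫ x in b..(b+1), (2 * ε * RT ψ x + (2 / ε + 5) * QQ ψ x)
        = 2 * ε * (∫ x in b..(b+1), RT ψ x) + (2 / ε + 5) * ∫ x in b..(b+1), QQ ψ x := by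
      rw [intervalIntegral.integral_add
        (f := fun x => 2 * ε * RT ψ x) (g := fun x => (2 / ε + 5) * QQ ψ x)
        ((continuous_const.mul cRT).intervalIntegrable _ _)
        ((continuous_const.mul cQQ).intervalIntegrable _ _),
        intervalIntegral.integral_const_mul, intervalIntegral.integral_const_mul]
    have h4 : ∫ x in b..(b+1), QQ ψ x = s (b+1) - s b := by
      have := hadj b (b+1)
      linarith
    have h5 : 2 * ε * (∫ x in b..(b+1), RT ψ x) ≤ 2 * ε * M :=
      mul_le_mul_of_nonneg_left (hRTcell b) (by linarith)
    have h6 : (2 / ε + 5) * (∫ x in b..(b+1), QQ ψ x)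
        = (2 / ε + 5) * (s (b+1) - s b) := by rw [h4]
    linarith [h1, h2, h3.le, h3.ge, h5]
  have hsbdd : ∀ b : ℝ, 0 ≤ b → s b ≤ 16 * M := by
    intro b hb
    have h := master 1 one_pos b hb
    have h4 : ∫ x in b..(b+1), QQ ψ x = s (b+1) - s b := by
      have := hadj b (b+1)
      linarith
    have hδ : s (b+1) - s b ≤ 2 * M := by
      have := hQcell b
      linarith
    have hδ0 : 0 ≤ s (b+1) - s b := by
      have := hsmono b (b+1) (by linarith)
      linarith
    norm_num at h
    nlinarith
  set σ : ℕ → ℝ := fun n => s n with hσdef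
  have hσmono : Monotone σ := by
    intro m n hmn
    exact hsmono m n (by exact_mod_cast hmn)
  have hσbdd : BddAbove (Set.range σ) := by
    refine ⟨16 * M, ?_⟩
    rintro q ⟨n, rfl⟩
    exact hsbdd n (by positivity)
  have htend := tendsto_atTop_ciSup hσmono hσbdd
  set L := ⨆ n, σ n with hLdef
  have htend1 : Filter.Tendsto (fun n => σ (n + 1)) Filter.atTop (nhds L) :=
    htend.comp (Filter.tendsto_add_atTop_nat 1)
  have hδtend : Filter.Tendsto (fun n => σ (n + 1) - σ n) Filter.atTop (nhds 0) := by
    have := htend1.sub htend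
    simpa using this
  have hLle : ∀ ε : ℝ, 0 < ε → L ≤ 2 * ε * M := by
    intro ε hε
    have hRHS : Filter.Tendsto (fun n : ℕ => 2 * ε * M + (2 / ε + 5) * (σ (n + 1) - σ n))
        Filter.atTop (nhds (2 * ε * M)) := by
      have h := (hδtend.const_mul (2 / ε + 5)).const_add (2 * ε * M)
      simpa using h
    apply le_of_tendsto_of_tendsto' htend hRHS
    intro n
    have h := master ε hε n (by positivity)
    have hcast : σ (n+1) = s ((n:ℝ) + 1) := by
      simp only [hσdef]
      norm_num
    rw [hcast]
    exact h
  have hL0 : L ≤ 0 := by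
    by_contra hL
    push_neg at hL
    have h := hLle (L / (4 * M)) (by positivity)
    have he : 2 * (L / (4 * M)) * M = L / 2 := by field_simp; ring
    rw [he] at h
    linarith
  have hσ0 : ∀ n : ℕ, σ n = 0 := by
    intro n
    have h1 : σ n ≤ L := le_ciSup hσbdd n
    have h2 : 0 ≤ σ n := hs0 n (by positivity)
    linarith
  have hszero : ∀ b : ℝ, 0 ≤ b → s b = 0 := by
    intro b hb
    obtain ⟨n, hn⟩ := exists_nat_ge b
    have h1 : s b ≤ s n := hsmono b n hn
    have h2 := hσ0 n
    have h3 := hs0 b hb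
    simp only [hσdef] at h2
    linarith [h2.le, h2.ge]
  have hQQzero : ∀ x : ℝ, QQ ψ x = 0 := by
    have hpos : ∀ x : ℝ, 0 ≤ x → QQ ψ x = 0 := by
      intro x hxpos
      have hint : ∫ t in x..(x+1), QQ ψ t = 0 := by
        have h4 := hadj x (x+1)
        have h5 := hszero x hxpos
        have h6 := hszero (x+1) (by linarith)
        linarith
      exact zero_of_integrals_zero cQQ QQ_nonneg (by linarith : x < x + 1) hint x
        ⟨le_refl x, by linarith⟩
    intro x
    rcases le_or_gt 0 x with h | h
    · exact hpos x h
    · have he := QQ_even hsmooth hsymm (-x)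
      rw [neg_neg] at he
      rw [he]
      exact hpos (-x) (by linarith)
  have hyyzero : ∀ x : ℝ, ∀ y ∈ Set.Icc (-1:ℝ) 1, pdy (pdy ψ) x y = 0 := by
    intro x y hyIcc
    have iQ : IntervalIntegrable (fun y => (pdx (pdx ψ) x y) ^ 2 + 2 * (pdy (pdx ψ) x y) ^ 2
        + (pdy (pdy ψ) x y) ^ 2) volume (-1) 1 :=
      ((((contY hxx x).pow 2).add (continuous_const.mul ((contY hU x).pow 2))).add
        ((contY hyy x).pow 2)).intervalIntegrable _ _
    have hle : ∫ t in (-1:ℝ)..1, (pdy (pdy ψ) x t) ^ 2 ≤ QQ ψ x := by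
      apply intervalIntegral.integral_mono_on (by norm_num)
        (((contY hyy x).pow 2).intervalIntegrable _ _) iQ
      intro u _
      simp only [Pi.add_apply, Pi.pow_apply, Pi.mul_apply]
      nlinarith [sq_nonneg (pdx (pdx ψ) x u), sq_nonneg (pdy (pdx ψ) x u)]
    have hge : 0 ≤ ∫ t in (-1:ℝ)..1, (pdy (pdy ψ) x t) ^ 2 :=
      intervalIntegral.integral_nonneg (by norm_num) (fun u _ => sq_nonneg _)
    have hzero : ∫ t in (-1:ℝ)..1, (pdy (pdy ψ) x t) ^ 2 = 0 := by
      have := hQQzero x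
      linarith
    have h := zero_of_integrals_zero ((contY hyy x).pow 2) (fun t => sq_nonneg _)
      (by norm_num : (-1:ℝ) < 1) hzero y hyIcc
    exact pow_eq_zero_iff (by norm_num) |>.1 h
  have hyzero : ∀ x : ℝ, ∀ y ∈ Set.Icc (-1:ℝ) 1, pdy ψ x y = 0 := by
    intro x y hyIcc
    have hre := reprY hy x y
    rw [(hbc x).2.2.2.2.2] at hre
    have hint : ∫ t in y..1, pdy (pdy ψ) x t = 0 := by
      rw [intervalIntegral.integral_congr (g := fun _ => (0:ℝ))]
      · simp
      · intro t ht
        rw [Set.uIcc_of_le hyIcc.2] at ht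
        exact hyyzero x t ⟨le_trans hyIcc.1 ht.1, ht.2⟩
    rw [hint] at hre
    simpa using hre
  intro x y hyIcc
  have hre := reprY hsmooth x y
  rw [(hbc x).2.1] at hre
  have hint : ∫ t in y..1, pdy ψ x t = 0 := by
    rw [intervalIntegral.integral_congr (g := fun _ => (0:ℝ))]
    · simp
    · intro t ht
      rw [Set.uIcc_of_le hyIcc.2] at ht
      exact hyzero x t ⟨le_trans hyIcc.1 ht.1, ht.2⟩
  rw [hint] at hre
  simpa using hre
end Main
end

section
/- There exists ε > 0 such that for all real A and all T > 0 with |A·T| ≤ ε, the following holds: if λ ∈ ℂ has Re λ ≥ 0 and φ : [-1,1] → ℂ is a C⁴ function with φ(±1) = φ'(±1) = 0 satisfying φ''''(y) − 2T²φ''(y) + T⁴φ(y) + 3ATi[(1−y²)(φ''(y) − T²φ(y)) + 2φ(y)] = λ(φ''(y) − T²φ(y)) for all y ∈ (-1,1), then φ is identically zero. In other words, for |AT| sufficiently small, every eigenvalue of this Orr–Sommerfeld eigenvalue problem has strictly negative real part. -/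
/-!
Test the equation against `conj φ` and integrate by parts over `[-1, 1]`; the boundary conditions
`φ(±1) = φ'(±1) = 0` kill all boundary terms, and the real part of the resulting identity is
`‖φ''‖² + 2T²‖φ'‖² + T⁴‖φ‖² + Re λ (‖φ'‖² + T²‖φ‖²) = 3AT · Im ∫ (1 - y²) φ'' conj φ`,
because the other contributions of the shear flow are purely imaginary. The right side is at
most `3|AT| (‖φ''‖² + ‖φ‖²) / 2`, while the Poincaré inequality `‖ψ‖² ≤ 4‖ψ'‖²` for `ψ`
vanishing at `-1`, applied to `φ'` and `φ`, gives `‖φ‖² ≤ 16‖φ''‖²`. For small `|AT|` the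
identity therefore forces `‖φ''‖ = 0`, hence `φ = 0`.
-/

open MeasureTheory Set ComplexConjugate

theorem ContDiff.hasDerivAt_iteratedDeriv {𝕜 F : Type*} [NontriviallyNormedField 𝕜]
    [NormedAddCommGroup F] [NormedSpace 𝕜 F] {f : 𝕜 → F} {n : WithTop ℕ∞}
    (h : ContDiff 𝕜 n f) {m : ℕ} (hm : (m : WithTop ℕ∞) < n) (x : 𝕜) :
    HasDerivAt (iteratedDeriv m f) (iteratedDeriv (m + 1) f x) x := by
  rw [iteratedDeriv_succ]
  exact (h.differentiable_iteratedDeriv m hm x).hasDerivAt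

theorem ContDiff.hasDerivAt_deriv {𝕜 F : Type*} [NontriviallyNormedField 𝕜]
    [NormedAddCommGroup F] [NormedSpace 𝕜 F] {f : 𝕜 → F} {n : WithTop ℕ∞}
    (h : ContDiff 𝕜 n f) (hn : 2 ≤ n) (x : 𝕜) :
    HasDerivAt (deriv f) (iteratedDeriv 2 f x) x := by
  simpa only [iteratedDeriv_one] using
    h.hasDerivAt_iteratedDeriv (m := 1) (lt_of_lt_of_le (by norm_num) hn) x

namespace intervalIntegral

theorem integral_deriv_mul_conj_eq_neg {a b : ℝ} {u u' v v' : ℝ → ℂ}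
    (hu : ∀ x ∈ uIcc a b, HasDerivAt u (u' x) x) (hv : ∀ x ∈ uIcc a b, HasDerivAt v (v' x) x)
    (hu' : Continuous u') (hv' : Continuous v') (ha : v a = 0) (hb : v b = 0) :
    ∫ x in a..b, u' x * conj (v x) = -∫ x in a..b, u x * conj (v' x) := by
  have := integral_mul_deriv_eq_deriv_mul hu (fun x hx => (hv x hx).star)
    (hu'.intervalIntegrable a b) (hv'.star.intervalIntegrable a b)
  simp only [ha, hb, star_zero, mul_zero, sub_zero, zero_sub, Complex.star_def] at this
  rw [this, neg_neg]

theorem integral_mul_conj_self (a b : ℝ) (f : ℝ → ℂ) :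
    ∫ x in a..b, f x * conj (f x) = ((∫ x in a..b, ‖f x‖ ^ 2 : ℝ) : ℂ) := by
  simp only [Complex.mul_conj', ← Complex.ofReal_pow, integral_ofReal]

theorem integral_iteratedDeriv_two_mul_conj {a b : ℝ} {φ : ℝ → ℂ}
    (hφ : ContDiff ℝ 2 φ) (ha : φ a = 0) (hb : φ b = 0) :
    ∫ x in a..b, iteratedDeriv 2 φ x * conj (φ x) = -((∫ x in a..b, ‖deriv φ x‖ ^ 2 : ℝ) : ℂ) := by
  rw [integral_deriv_mul_conj_eq_neg (fun x _ => hφ.hasDerivAt_deriv le_rfl x)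
    (fun x _ => (hφ.differentiable (by norm_num) x).hasDerivAt)
    (hφ.continuous_iteratedDeriv 2 le_rfl) (hφ.continuous_deriv (by norm_num)) ha hb,
    integral_mul_conj_self]

theorem integral_iteratedDeriv_four_mul_conj {a b : ℝ} {φ : ℝ → ℂ}
    (hφ : ContDiff ℝ 4 φ) (ha : φ a = 0) (hb : φ b = 0) (ha' : deriv φ a = 0)
    (hb' : deriv φ b = 0) :
    ∫ x in a..b, iteratedDeriv 4 φ x * conj (φ x)
      = ((∫ x in a..b, ‖iteratedDeriv 2 φ x‖ ^ 2 : ℝ) : ℂ) := by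
  rw [integral_deriv_mul_conj_eq_neg
      (fun x _ => hφ.hasDerivAt_iteratedDeriv (m := 3) (by norm_num) x)
      (fun x _ => (hφ.differentiable (by norm_num) x).hasDerivAt)
      (hφ.continuous_iteratedDeriv 4 le_rfl) (hφ.continuous_deriv (by norm_num)) ha hb,
    integral_deriv_mul_conj_eq_neg
      (fun x _ => hφ.hasDerivAt_iteratedDeriv (m := 2) (by norm_num) x)
      (fun x _ => hφ.hasDerivAt_deriv (by norm_num) x)
      (hφ.continuous_iteratedDeriv 3 (by norm_num))
      (hφ.continuous_iteratedDeriv 2 (by norm_num)) ha' hb',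
    neg_neg, integral_mul_conj_self]

theorem sq_integral_le_mul_integral_sq {g : ℝ → ℝ} {a b : ℝ} (hab : a ≤ b)
    (hg : Continuous g) :
    (∫ x in a..b, g x) ^ 2 ≤ (b - a) * ∫ x in a..b, g x ^ 2 := by
  have hquad : ∀ t : ℝ,
      0 ≤ (b - a) * (t * t) + (-2 * ∫ x in a..b, g x) * t + ∫ x in a..b, g x ^ 2 := by
    intro t
    have h := integral_nonneg (μ := volume) hab (fun x _ => sq_nonneg (t - g x))
    have hexp : (fun x => (t - g x) ^ 2) = fun x => t ^ 2 - 2 * t * g x + g x ^ 2 := by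
      ext x; ring
    rw [hexp] at h
    simp (disch := exact Continuous.intervalIntegrable (by fun_prop) _ _) only
      [integral_add, integral_sub,
        integral_const_mul, integral_const] at h
    simp only [smul_eq_mul] at h
    linarith
  have := discrim_le_zero hquad
  rw [discrim] at this
  linarith

theorem integral_norm_sq_le_of_left_eq_zero {E : Type*} [NormedAddCommGroup E]
    [NormedSpace ℝ E] [CompleteSpace E] {f f' : ℝ → E} {a b : ℝ} (hab : a ≤ b)
    (hf : ∀ x, HasDerivAt f (f' x) x) (hf' : Continuous f') (ha : f a = 0) :
    ∫ x in a..b, ‖f x‖ ^ 2 ≤ (b - a) ^ 2 * ∫ x in a..b, ‖f' x‖ ^ 2 := by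
  set M := ∫ x in a..b, ‖f' x‖
  have hcont : Continuous f := continuous_iff_continuousAt.2 fun x => (hf x).continuousAt
  have hpointwise : ∀ y ∈ Icc a b, ‖f y‖ ^ 2 ≤ M ^ 2 := by
    intro y hy
    have hfy : f y = ∫ x in a..y, f' x := by
      rw [integral_eq_sub_of_hasDerivAt (fun x _ => hf x)
        (hf'.intervalIntegrable a y), ha, sub_zero]
    have : ‖f y‖ ≤ M := calc
      ‖f y‖ ≤ ∫ x in a..y, ‖f' x‖ := hfy ▸ norm_integral_le_integral_norm hy.1
      _ ≤ M := integral_mono_interval le_rfl hy.1 hy.2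
        (Filter.Eventually.of_forall fun x => norm_nonneg _) (hf'.norm.intervalIntegrable a b)
    exact pow_le_pow_left₀ (norm_nonneg _) this 2
  calc ∫ x in a..b, ‖f x‖ ^ 2 ≤ ∫ _ in a..b, M ^ 2 :=
        integral_mono_on hab ((hcont.norm.pow 2).intervalIntegrable a b)
          intervalIntegrable_const hpointwise
    _ = (b - a) * M ^ 2 := by rw [integral_const, smul_eq_mul]
    _ ≤ (b - a) * ((b - a) * ∫ x in a..b, ‖f' x‖ ^ 2) := by
        gcongr
        exact sq_integral_le_mul_integral_sq hab hf'.norm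
    _ = (b - a) ^ 2 * ∫ x in a..b, ‖f' x‖ ^ 2 := by ring

theorem norm_integral_mul_mul_conj_le {a b : ℝ} (hab : a ≤ b) {w : ℝ → ℝ}
    (hw : Continuous w) (hw1 : ∀ x ∈ Icc a b, |w x| ≤ 1) {u v : ℝ → ℂ} (hu : Continuous u)
    (hv : Continuous v) :
    ‖∫ x in a..b, (w x : ℂ) * (u x * conj (v x))‖
      ≤ ((∫ x in a..b, ‖u x‖ ^ 2) + ∫ x in a..b, ‖v x‖ ^ 2) / 2 := by
  have hpointwise : ∀ x ∈ Icc a b,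
      ‖(w x : ℂ) * (u x * conj (v x))‖ ≤ (‖u x‖ ^ 2 + ‖v x‖ ^ 2) / 2 := by
    intro x hx
    rw [norm_mul, norm_mul, Complex.norm_real, Real.norm_eq_abs, Complex.norm_conj]
    nlinarith [hw1 x hx, abs_nonneg (w x), mul_nonneg (norm_nonneg (u x)) (norm_nonneg (v x)),
      sq_nonneg (‖u x‖ - ‖v x‖)]
  calc ‖∫ x in a..b, (w x : ℂ) * (u x * conj (v x))‖
      ≤ ∫ x in a..b, ‖(w x : ℂ) * (u x * conj (v x))‖ :=
        norm_integral_le_integral_norm hab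
    _ ≤ ∫ x in a..b, (‖u x‖ ^ 2 + ‖v x‖ ^ 2) / 2 :=
        integral_mono_on hab (Continuous.intervalIntegrable (by fun_prop) a b)
          (Continuous.intervalIntegrable (by fun_prop) a b) hpointwise
    _ = ((∫ x in a..b, ‖u x‖ ^ 2) + ∫ x in a..b, ‖v x‖ ^ 2) / 2 := by
        rw [integral_div, integral_add
          (Continuous.intervalIntegrable (by fun_prop) a b)
          (Continuous.intervalIntegrable (by fun_prop) a b)]

theorem eq_zero_of_integral_norm_sq_nonpos {E : Type*} [NormedAddCommGroup E]
    {f : ℝ → E} {a b : ℝ} (hab : a < b) (hf : Continuous f)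
    (h : ∫ x in a..b, ‖f x‖ ^ 2 ≤ 0) : ∀ y ∈ Icc a b, f y = 0 := by
  intro y hy
  by_contra hne
  have hpos : 0 < ∫ x in a..b, ‖f x‖ ^ 2 :=
    integral_pos hab (by fun_prop) (fun x _ => sq_nonneg _)
      ⟨y, hy, by positivity⟩
  linarith

end intervalIntegral

theorem orrSommerfeld_energy_identity {A T : ℝ} {lam : ℂ} {φ : ℝ → ℂ} (hφ : ContDiff ℝ 4 φ)
    (hm1 : φ (-1) = 0) (hp1 : φ 1 = 0) (hdm1 : deriv φ (-1) = 0) (hdp1 : deriv φ 1 = 0)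
    (heq : ∀ y ∈ Ioo (-1 : ℝ) 1,
      iteratedDeriv 4 φ y - 2 * (T : ℂ) ^ 2 * iteratedDeriv 2 φ y + (T : ℂ) ^ 4 * φ y
        + 3 * (A : ℂ) * (T : ℂ) * Complex.I *
            (((1 - y ^ 2 : ℝ) : ℂ) * (iteratedDeriv 2 φ y - (T : ℂ) ^ 2 * φ y) + 2 * φ y)
        = lam * (iteratedDeriv 2 φ y - (T : ℂ) ^ 2 * φ y)) :
    (∫ x in (-1 : ℝ)..1, ‖iteratedDeriv 2 φ x‖ ^ 2)
        + 2 * T ^ 2 * (∫ x in (-1 : ℝ)..1, ‖deriv φ x‖ ^ 2)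
        + T ^ 4 * (∫ x in (-1 : ℝ)..1, ‖φ x‖ ^ 2)
        + lam.re * ((∫ x in (-1 : ℝ)..1, ‖deriv φ x‖ ^ 2) + T ^ 2 * ∫ x in (-1 : ℝ)..1, ‖φ x‖ ^ 2)
      = 3 * A * T * (∫ x in (-1 : ℝ)..1,
          ((1 - x ^ 2 : ℝ) : ℂ) * (iteratedDeriv 2 φ x * conj (φ x))).im := by
  have hc0 : Continuous φ := hφ.continuous
  have hc2 : Continuous (iteratedDeriv 2 φ) := hφ.continuous_iteratedDeriv 2 (by norm_num)
  have hc4 : Continuous (iteratedDeriv 4 φ) := hφ.continuous_iteratedDeriv 4 le_rfl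
  have htested : EqOn
      (fun y => iteratedDeriv 4 φ y * conj (φ y)
        - 2 * (T : ℂ) ^ 2 * (iteratedDeriv 2 φ y * conj (φ y))
        + ((T : ℂ) ^ 4 + 6 * A * T * Complex.I) * (φ y * conj (φ y))
        + 3 * A * T * Complex.I * (((1 - y ^ 2 : ℝ) : ℂ) * (iteratedDeriv 2 φ y * conj (φ y)))
        - 3 * A * T ^ 3 * Complex.I * (((1 - y ^ 2 : ℝ) : ℂ) * (φ y * conj (φ y))))
      (fun y => lam * (iteratedDeriv 2 φ y * conj (φ y)) - lam * T ^ 2 * (φ y * conj (φ y)))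
      (uIcc (-1) 1) := by
    rw [uIcc_of_le (by norm_num), ← closure_Ioo (by norm_num)]
    refine EqOn.closure (fun y hy => ?_) (by fun_prop) (by fun_prop)
    linear_combination conj (φ y) * heq y hy
  have hint := intervalIntegral.integral_congr (μ := volume) htested
  simp (disch := exact Continuous.intervalIntegrable (by fun_prop) _ _) only
    [intervalIntegral.integral_add, intervalIntegral.integral_sub,
      intervalIntegral.integral_const_mul] at hint
  have hP : ∫ y in (-1 : ℝ)..1, ((1 - y ^ 2 : ℝ) : ℂ) * (φ y * conj (φ y))
      = ((∫ y in (-1 : ℝ)..1, (1 - y ^ 2) * ‖φ y‖ ^ 2 : ℝ) : ℂ) := by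
    simp only [Complex.mul_conj', ← Complex.ofReal_pow, ← Complex.ofReal_mul,
      intervalIntegral.integral_ofReal]
  rw [intervalIntegral.integral_iteratedDeriv_four_mul_conj hφ hm1 hp1 hdm1 hdp1,
    intervalIntegral.integral_iteratedDeriv_two_mul_conj (hφ.of_le (by norm_num)) hm1 hp1,
    intervalIntegral.integral_mul_conj_self, hP] at hint
  have hre := congrArg Complex.re hint
  simp only [← Complex.ofReal_pow, Complex.add_re, Complex.sub_re, Complex.mul_re,
    Complex.neg_re, Complex.neg_im, Complex.ofReal_re, Complex.ofReal_im, Complex.I_re,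
    Complex.I_im, Complex.add_im, Complex.mul_im, Complex.re_ofNat, Complex.im_ofNat] at hre
  linear_combination hre

/-- Claim \eqref{claim} of the paper: there is `ε > 0` such that whenever `|A·T| ≤ ε`
(`T > 0`), the Orr–Sommerfeld eigenvalue problem
`φ'''' − 2T²φ'' + T⁴φ + 3ATi[(1−y²)(φ'' − T²φ) + 2φ] = λ(φ'' − T²φ)` on `(-1,1)` with
`φ(±1) = φ'(±1) = 0` has no nontrivial solution with `Re λ ≥ 0`; that is, every eigenvalue
has strictly negative real part. -/
theorem stmt_18 :
    ∃ ε > (0 : ℝ), ∀ (A T : ℝ), 0 < T → |A * T| ≤ ε →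
      ∀ (lam : ℂ) (φ : ℝ → ℂ), 0 ≤ lam.re → ContDiff ℝ 4 φ →
        φ (-1) = 0 → φ 1 = 0 → deriv φ (-1) = 0 → deriv φ 1 = 0 →
        (∀ y ∈ Set.Ioo (-1 : ℝ) 1,
          iteratedDeriv 4 φ y - 2 * (T : ℂ) ^ 2 * iteratedDeriv 2 φ y + (T : ℂ) ^ 4 * φ y
            + 3 * (A : ℂ) * (T : ℂ) * Complex.I *
                (((1 - y ^ 2 : ℝ) : ℂ) * (iteratedDeriv 2 φ y - (T : ℂ) ^ 2 * φ y)
                  + 2 * φ y)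
            = lam * (iteratedDeriv 2 φ y - (T : ℂ) ^ 2 * φ y)) →
        ∀ y ∈ Set.Icc (-1 : ℝ) 1, φ y = 0 := by
  -- any `ε` with `3ε (1 + 16) / 2 < 1` would do
  refine ⟨1 / 100, by norm_num, fun A T _ hAT lam φ hlam hφ hm1 hp1 hdm1 hdp1 heq => ?_⟩
  have henergy := orrSommerfeld_energy_identity hφ hm1 hp1 hdm1 hdp1 heq
  set Z := ∫ x in (-1 : ℝ)..1, ((1 - x ^ 2 : ℝ) : ℂ) * (iteratedDeriv 2 φ x * conj (φ x))
  set a := ∫ x in (-1 : ℝ)..1, ‖iteratedDeriv 2 φ x‖ ^ 2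
  set b := ∫ x in (-1 : ℝ)..1, ‖deriv φ x‖ ^ 2
  set c := ∫ x in (-1 : ℝ)..1, ‖φ x‖ ^ 2
  have hZ : |Z.im| ≤ (a + c) / 2 :=
    (Complex.abs_im_le_norm Z).trans <|
      intervalIntegral.norm_integral_mul_mul_conj_le (by norm_num) (by fun_prop)
        (fun x hx => abs_le.2 ⟨by nlinarith [hx.1, hx.2], by nlinarith⟩)
        (hφ.continuous_iteratedDeriv 2 (by norm_num)) hφ.continuous
  have hba : b ≤ 4 * a :=
    (intervalIntegral.integral_norm_sq_le_of_left_eq_zero (by norm_num : (-1 : ℝ) ≤ 1)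
      (hφ.hasDerivAt_deriv (by norm_num)) (hφ.continuous_iteratedDeriv 2 (by norm_num))
      hdm1).trans_eq (by norm_num [a])
  have hcb : c ≤ 4 * b :=
    (intervalIntegral.integral_norm_sq_le_of_left_eq_zero (by norm_num : (-1 : ℝ) ≤ 1)
      (fun x => (hφ.differentiable (by norm_num) x).hasDerivAt)
      (hφ.continuous_deriv (by norm_num)) hm1).trans_eq (by norm_num [b])
  have ha0 : 0 ≤ a := intervalIntegral.integral_nonneg (by norm_num) fun x _ => sq_nonneg _
  have hb0 : 0 ≤ b := intervalIntegral.integral_nonneg (by norm_num) fun x _ => sq_nonneg _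
  have hc0 : 0 ≤ c := intervalIntegral.integral_nonneg (by norm_num) fun x _ => sq_nonneg _
  have hforcing : 3 * A * T * Z.im ≤ 3 / 100 * ((a + c) / 2) := calc
    3 * A * T * Z.im ≤ 3 * (|A * T| * |Z.im|) := by
        rw [← abs_mul, mul_assoc 3 A T, mul_assoc]; gcongr; exact le_abs_self _
    _ ≤ 3 * (1 / 100 * ((a + c) / 2)) := by gcongr
    _ = 3 / 100 * ((a + c) / 2) := by ring
  have hc_nonpos : c ≤ 0 := by
    nlinarith [mul_nonneg (sq_nonneg T) hb0, mul_nonneg (pow_nonneg (sq_nonneg T) 2) hc0,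
      mul_nonneg hlam (add_nonneg hb0 (mul_nonneg (sq_nonneg T) hc0))]
  exact intervalIntegral.eq_zero_of_integral_norm_sq_nonpos (by norm_num) hφ.continuous hc_nonpos
end
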